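/- arXiv:1207.3317 — 8 statements merged into one kernel-verified Lean document; each statement's English description precedes it below -/
import Mathlib

section
/- There exist two infinite sets A and M of positive integers such that p(n,A,M) = 1 for every positive integer n; that is, every positive integer n has exactly one representation n = ∑_{a ∈ A} m_a · a where each m_a ∈ M ∪ {0} and all but finitely many m_a are 0. -/
/-!
Write `n` in binary, `n = ∑_{k ∈ K} 2^k`, and split every bit position as `k = s + t` with `s`
having its binary digits only at even places and `t` only at odd places; this splitting is unique.
Grouping the bits of `n` by `t` gives `n = ∑_t m_t · 2^t` with `m_t = ∑_{s + t ∈ K} 2^s`, so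
`A = {2^t}` and `M = {nonempty finite sums of distinct 2^s}` work: conversely, a representation
determines its set of bit positions `s + t`, hence by uniqueness of binary expansions it is the
one above.
-/

open Filter

/-- `pCount A M n` is `p(n, A, M)`: the number of finitely supported functions
`m : ℕ → ℕ` with support contained in `A`, nonzero values in `M`, and
`∑_{a ∈ A} m(a) · a = n`. -/
noncomputable def pCount (A M : Set ℕ) (n : ℕ) : ℕ :=
  {f : ℕ →₀ ℕ | ↑f.support ⊆ A ∧ (∀ a ∈ f.support, f a ∈ M) ∧
    f.sum (fun a m => m * a) = n}.ncard

/-- Moves the binary digit of `n` at place `i` to place `2 * i`. -/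
def spread : ℕ → ℕ
  | 0 => 0
  | n + 1 => (n + 1) % 2 + 4 * spread ((n + 1) / 2)

lemma spread_eq (n : ℕ) : spread n = n % 2 + 4 * spread (n / 2) := by
  cases n <;> simp [spread]

lemma spread_add_two_mul_spread (x y : ℕ) :
    spread x + 2 * spread y =
      x % 2 + 2 * (y % 2) + 4 * (spread (x / 2) + 2 * spread (y / 2)) := by
  rw [spread_eq x, spread_eq y]
  ring

lemma spread_add_two_mul_spread_injective :
    Function.Injective fun p : ℕ × ℕ => spread p.1 + 2 * spread p.2 := by
  suffices h : ∀ N x y x' y', x + y + x' + y' = N →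
      spread x + 2 * spread y = spread x' + 2 * spread y' → x = x' ∧ y = y' from
    fun p q hpq => Prod.ext_iff.2 (h _ p.1 p.2 q.1 q.2 rfl hpq)
  intro N
  induction N using Nat.strong_induction_on with
  | _ N ih =>
    intro x y x' y' hN heq
    rcases Nat.eq_zero_or_pos N with rfl | hN0
    · omega
    rw [spread_add_two_mul_spread x y, spread_add_two_mul_spread x' y'] at heq
    obtain ⟨hx, hy⟩ := ih _ (by omega) (x / 2) (y / 2) (x' / 2) (y' / 2) rfl (by omega)
    omega

lemma spread_add_two_mul_spread_surjective :
    Function.Surjective fun p : ℕ × ℕ => spread p.1 + 2 * spread p.2 := by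
  intro n
  induction n using Nat.strong_induction_on with
  | _ n ih =>
    rcases Nat.eq_zero_or_pos n with rfl | hn
    · exact ⟨(0, 0), by simp [spread]⟩
    obtain ⟨⟨u, v⟩, huv⟩ := ih (n / 4) (by omega)
    refine ⟨(2 * u + n % 2, 2 * v + n / 2 % 2), ?_⟩
    dsimp only at huv ⊢
    rw [spread_add_two_mul_spread, show (2 * u + n % 2) / 2 = u by omega,
      show (2 * v + n / 2 % 2) / 2 = v by omega, huv]
    omega

section BinaryBlocks

variable (σ τ : ℕ → ℕ)

def blockSums : Set ℕ := {m | ∃ X : Finset ℕ, X.Nonempty ∧ m = ∑ x ∈ X, 2 ^ σ x}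

noncomputable def ofPairs (Q : Finset (ℕ × ℕ)) : ℕ →₀ ℕ :=
  ∑ q ∈ Q, Finsupp.single (2 ^ τ q.2) (2 ^ σ q.1)

variable {σ τ}

lemma injective_left_of_injective_add (he : Function.Injective fun p : ℕ × ℕ => σ p.1 + τ p.2) :
    σ.Injective :=
  fun x x' h => (Prod.mk.inj (@he (x, 0) (x', 0) (congrArg (· + τ 0) h))).1

lemma injective_right_of_injective_add (he : Function.Injective fun p : ℕ × ℕ => σ p.1 + τ p.2) :
    τ.Injective :=
  fun y y' h => (Prod.mk.inj (@he (0, y) (0, y') (congrArg (σ 0 + ·) h))).2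

lemma pos_of_mem_blockSums {m : ℕ} (hm : m ∈ blockSums σ) : 0 < m := by
  obtain ⟨X, hX, rfl⟩ := hm
  exact Finset.sum_pos (fun _ _ => by positivity) hX

lemma blockSums_infinite (hσ : σ.Injective) : (blockSums σ).Infinite :=
  Set.infinite_of_injective_forall_mem ((Nat.pow_right_injective le_rfl).comp hσ)
    fun x => ⟨{x}, Finset.singleton_nonempty x, (Finset.sum_singleton _ x).symm⟩

lemma sum_ofPairs (Q : Finset (ℕ × ℕ)) :
    (ofPairs σ τ Q).sum (fun a m => m * a) = ∑ q ∈ Q, 2 ^ (σ q.1 + τ q.2) := by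
  rw [ofPairs, ← Finsupp.sum_finsetSum_index (fun _ => zero_mul _) (fun _ _ _ => add_mul _ _ _)]
  exact Finset.sum_congr rfl fun q _ => by
    rw [Finsupp.sum_single_index (zero_mul _), pow_add]

lemma support_ofPairs_subset (Q : Finset (ℕ × ℕ)) :
    ↑(ofPairs σ τ Q).support ⊆ Set.range fun y => 2 ^ τ y := by
  intro a ha
  obtain ⟨q, -, hq⟩ := Finset.mem_biUnion.1 (Finsupp.support_finsetSum ha)
  exact ⟨q.2, (Finset.mem_singleton.1 (Finsupp.support_single_subset hq)).symm⟩

lemma ofPairs_apply_two_pow (hτ : τ.Injective) (Q : Finset (ℕ × ℕ)) (y : ℕ) :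
    ofPairs σ τ Q (2 ^ τ y) = ∑ x ∈ (Q.filter (·.2 = y)).image Prod.fst, 2 ^ σ x := by
  rw [Finset.sum_image fun p hp q hq h => Prod.ext h
    (((Finset.mem_filter.1 hp).2).trans (Finset.mem_filter.1 hq).2.symm),
    ofPairs, Finsupp.finsetSum_apply, Finset.sum_filter]
  refine Finset.sum_congr rfl fun q _ => ?_
  simp [Finsupp.single_apply, hτ.eq_iff]

lemma ofPairs_apply_mem_blockSums (hτ : τ.Injective) (Q : Finset (ℕ × ℕ)) :
    ∀ a ∈ (ofPairs σ τ Q).support, ofPairs σ τ Q a ∈ blockSums σ := by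
  intro a ha
  obtain ⟨y, rfl⟩ := support_ofPairs_subset Q ha
  refine ⟨_, ?_, ofPairs_apply_two_pow hτ Q y⟩
  rw [Finset.nonempty_iff_ne_empty]
  intro hempty
  exact Finsupp.mem_support_iff.1 ha (by rw [ofPairs_apply_two_pow hτ, hempty, Finset.sum_empty])

lemma exists_ofPairs_eq {g : ℕ →₀ ℕ} (hA : ↑g.support ⊆ Set.range fun y => 2 ^ τ y)
    (hM : ∀ a ∈ g.support, g a ∈ blockSums σ) : ∃ Q, ofPairs σ τ Q = g := by
  have hA' : ∀ a ∈ g.support, ∃ y, 2 ^ τ y = a := fun a ha => hA ha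
  choose! y hy using hA'
  choose! X hX using fun a ha => (hM a ha).imp fun _ => And.right
  refine ⟨g.support.biUnion fun a => (X a).image fun x => (x, y a), ?_⟩
  rw [ofPairs, Finset.sum_biUnion]
  · conv_rhs => rw [← Finsupp.sum_single g]
    refine Finset.sum_congr rfl fun a ha => ?_
    rw [Finset.sum_image fun _ _ _ _ h => (Prod.mk.inj h).1]
    dsimp only
    rw [hy a ha, hX a ha, Finsupp.single_finsetSum]
  · intro a ha a' ha' hne
    simp only [Function.onFun, Finset.disjoint_left, Finset.mem_image]
    rintro _ ⟨x, -, rfl⟩ ⟨x', -, hxx'⟩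
    exact hne (by rw [← hy a ha, ← hy a' ha', (Prod.mk.inj hxx').2])

lemma bijective_sum_two_pow (he : Function.Bijective fun p : ℕ × ℕ => σ p.1 + τ p.2) :
    Function.Bijective fun Q : Finset (ℕ × ℕ) => ∑ q ∈ Q, 2 ^ (σ q.1 + τ q.2) := by
  let F := (Equiv.ofBijective _ he).finsetCongr.trans Finset.equivBitIndices.symm
  convert F.bijective using 1
  exact funext fun Q => (Finset.sum_map Q (Equiv.ofBijective _ he).toEmbedding (2 ^ ·)).symm

theorem pCount_range_two_pow_blockSums
    (he : Function.Bijective fun p : ℕ × ℕ => σ p.1 + τ p.2) (n : ℕ) :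
    pCount (Set.range fun y => 2 ^ τ y) (blockSums σ) n = 1 := by
  have hτ := injective_right_of_injective_add he.1
  obtain ⟨Q₀, hQ₀, hQ₀_unique⟩ := (bijective_sum_two_pow he).existsUnique n
  rw [pCount, Set.ncard_eq_one]
  refine ⟨ofPairs σ τ Q₀, Set.eq_singleton_iff_unique_mem.2 ⟨?_, ?_⟩⟩
  · exact ⟨support_ofPairs_subset Q₀, ofPairs_apply_mem_blockSums hτ Q₀, by rwa [sum_ofPairs]⟩
  · rintro g ⟨hA, hM, hsum⟩
    obtain ⟨Q, rfl⟩ := exists_ofPairs_eq hA hM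
    rw [hQ₀_unique Q (by rwa [sum_ofPairs] at hsum)]

end BinaryBlocks

theorem stmt0 :
    ∃ A M : Set ℕ, A.Infinite ∧ M.Infinite ∧ (∀ a ∈ A, 0 < a) ∧ (∀ m ∈ M, 0 < m) ∧
      ∀ n : ℕ, 0 < n → pCount A M n = 1 := by
  let τ y := 2 * spread y
  have he : Function.Bijective fun p : ℕ × ℕ => spread p.1 + τ p.2 :=
    ⟨spread_add_two_mul_spread_injective, spread_add_two_mul_spread_surjective⟩
  refine ⟨Set.range fun y => 2 ^ τ y, blockSums spread, ?_,
    blockSums_infinite (injective_left_of_injective_add he.1), ?_,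
    fun _ => pos_of_mem_blockSums, fun n _ => pCount_range_two_pow_blockSums he n⟩
  · exact Set.infinite_range_of_injective
      ((Nat.pow_right_injective le_rfl).comp (injective_right_of_injective_add he.1))
  · rintro _ ⟨y, rfl⟩
    positivity
end

section
/- Let B and C be disjoint infinite sets of nonnegative integers with B ∪ C equal to the set of all nonnegative integers. Let D = {∑_{i ∈ B'} 2^i : B' a finite subset of B} and E = {∑_{j ∈ C'} 2^j : C' a finite subset of C}. Define A = {2^d : d ∈ D} and M = {∑_{e ∈ E'} 2^e : E' a finite nonempty subset of E}. Then A and M are infinite sets of positive integers and p(n,A,M) = 1 for every positive integer n. -/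
open Filter

/-!
Call `D, E ⊆ ℕ` additive complements if every `k` is uniquely `d + e` with `d ∈ D`, `e ∈ E`; the
numbers whose binary digits lie in `B`, resp. in `C`, form such a pair. A representation
`n = ∑ mₐ a` with `a = 2 ^ d` and `mₐ = ∑_{e ∈ sₐ} 2 ^ e` expands to
`n = ∑ₐ ∑_{e ∈ sₐ} 2 ^ (d + e)`. The exponents `d + e` are pairwise distinct, so by uniqueness of
binary expansions they are exactly the binary digits of `n`; splitting each digit `k = d + e` back
recovers the representation, and conversely this splitting produces one for every `n`.
-/

open Finset

def bits (n : ℕ) : Finset ℕ := n.bitIndices.toFinset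

@[simp] lemma bits_sum_two_pow (s : Finset ℕ) : bits (∑ i ∈ s, 2 ^ i) = s :=
  toFinset_bitIndices_sum_two_pow s

@[simp] lemma sum_two_pow_bits (n : ℕ) : ∑ i ∈ bits n, 2 ^ i = n :=
  sum_toFinset_bitIndices_two_pow n

lemma bits_injective : Function.Injective bits :=
  Function.LeftInverse.injective (g := fun s => ∑ i ∈ s, 2 ^ i) sum_two_pow_bits

@[simp] lemma bits_two_pow (i : ℕ) : bits (2 ^ i) = {i} := by
  simp [bits]

@[simp] lemma bits_eq_empty {n : ℕ} : bits n = ∅ ↔ n = 0 := by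
  rw [← bits_injective.eq_iff, show bits 0 = ∅ by simp [bits]]

lemma bits_add {m n : ℕ} (h : Disjoint (bits m) (bits n)) :
    bits (m + n) = bits m ∪ bits n := by
  conv_lhs => rw [← sum_two_pow_bits m, ← sum_two_pow_bits n, ← sum_union h]
  exact bits_sum_two_pow _

def bitsWithin (S : Set ℕ) : Set ℕ := {n | ↑(bits n) ⊆ S}

lemma two_pow_mem_bitsWithin {S : Set ℕ} {i : ℕ} (hi : i ∈ S) : 2 ^ i ∈ bitsWithin S := by
  simpa [bitsWithin] using hi

lemma bitsWithin_infinite {S : Set ℕ} (hS : S.Infinite) : (bitsWithin S).Infinite :=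
  (hS.image (Nat.pow_right_injective le_rfl).injOn).mono <| by
    rintro _ ⟨i, hi, rfl⟩
    exact two_pow_mem_bitsWithin hi

lemma setOf_sum_two_pow (S : Set ℕ) :
    {n | ∃ s : Finset ℕ, ↑s ⊆ S ∧ n = ∑ i ∈ s, 2 ^ i} = bitsWithin S := by
  ext n
  constructor
  · rintro ⟨s, hs, rfl⟩
    simpa [bitsWithin] using hs
  · exact fun hn => ⟨bits n, hn, (sum_two_pow_bits n).symm⟩

lemma setOf_nonempty_sum_two_pow (S : Set ℕ) :
    {n | ∃ s : Finset ℕ, ↑s ⊆ S ∧ s.Nonempty ∧ n = ∑ i ∈ s, 2 ^ i} =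
      bitsWithin S \ {0} := by
  ext n
  constructor
  · rintro ⟨s, hs, hne, rfl⟩
    refine ⟨by simpa [bitsWithin] using hs, fun h0 => ?_⟩
    rw [Set.mem_singleton_iff, ← bits_eq_empty, bits_sum_two_pow] at h0
    exact hne.ne_empty h0
  · rintro ⟨hn, h0⟩
    refine ⟨bits n, hn, nonempty_iff_ne_empty.2 fun h => h0 (bits_eq_empty.1 h), ?_⟩
    exact (sum_two_pow_bits n).symm

def IsAddComplement (D E : Set ℕ) : Prop :=
  Function.Bijective fun p : D × E => (p.1 : ℕ) + p.2

lemma bits_inter_of_mem_bitsWithin {B C : Set ℕ} (hBC : Disjoint B C) {d e : ℕ}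
    (hd : d ∈ bitsWithin B) (he : e ∈ bitsWithin C) :
    ↑(bits (d + e)) ∩ B = (bits d : Set ℕ) := by
  have hde : Disjoint (bits d) (bits e) := Finset.disjoint_coe.1 (hBC.mono hd he)
  rw [bits_add hde, coe_union, Set.union_inter_distrib_right, Set.inter_eq_left.2 hd,
    Set.disjoint_iff_inter_eq_empty.1 (hBC.symm.mono_left he), Set.union_empty]

lemma isAddComplement_bitsWithin {B C : Set ℕ} (hBC : Disjoint B C)
    (hunion : B ∪ C = Set.univ) :
    IsAddComplement (bitsWithin B) (bitsWithin C) := by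
  classical
  constructor
  · rintro ⟨⟨d, hd⟩, ⟨e, he⟩⟩ ⟨⟨d', hd'⟩, ⟨e', he'⟩⟩ (heq : d + e = d' + e')
    have hdd' : d = d' := bits_injective <| Finset.coe_injective <| by
      rw [← bits_inter_of_mem_bitsWithin hBC hd he, heq,
        bits_inter_of_mem_bitsWithin hBC hd' he']
    subst hdd'
    obtain rfl : e = e' := by omega
    rfl
  · intro k
    refine ⟨⟨⟨∑ i ∈ bits k with i ∈ B, 2 ^ i, ?_⟩,
      ⟨∑ i ∈ bits k with i ∉ B, 2 ^ i, ?_⟩⟩, ?_⟩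
    · rw [bitsWithin, Set.mem_ofPred_eq, bits_sum_two_pow]
      exact fun i hi => (mem_filter.1 hi).2
    · rw [bitsWithin, Set.mem_ofPred_eq, bits_sum_two_pow]
      exact fun i hi => Set.compl_subset_iff_union.2 hunion (mem_filter.1 hi).2
    · exact (sum_filter_add_sum_filter_not _ _ _).trans (sum_two_pow_bits k)

def digitSet (f : ℕ →₀ ℕ) : Finset ℕ :=
  (f.support.sigma fun a => bits (f a)).image fun x => Nat.log 2 x.1 + x.2

namespace IsAddComplement

variable {D E : Set ℕ}

noncomputable def fst (h : IsAddComplement D E) (k : ℕ) : ℕ :=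
  ((Equiv.ofBijective _ h).symm k).1

noncomputable def snd (h : IsAddComplement D E) (k : ℕ) : ℕ :=
  ((Equiv.ofBijective _ h).symm k).2

lemma fst_mem (h : IsAddComplement D E) (k : ℕ) : h.fst k ∈ D :=
  ((Equiv.ofBijective _ h).symm k).1.2

lemma snd_mem (h : IsAddComplement D E) (k : ℕ) : h.snd k ∈ E :=
  ((Equiv.ofBijective _ h).symm k).2.2

lemma fst_add_snd (h : IsAddComplement D E) (k : ℕ) : h.fst k + h.snd k = k :=
  Equiv.ofBijective_apply_symm_apply _ h k

lemma fst_snd_add (h : IsAddComplement D E) {d e : ℕ} (hd : d ∈ D) (he : e ∈ E) :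
    h.fst (d + e) = d ∧ h.snd (d + e) = e := by
  have hsplit := (Equiv.ofBijective _ h).symm_apply_apply (⟨d, hd⟩, ⟨e, he⟩)
  exact ⟨congrArg (fun p : D × E => (p.1 : ℕ)) hsplit, congrArg (fun p : D × E => (p.2 : ℕ)) hsplit⟩

lemma eq_of_fst_eq_of_snd_eq (h : IsAddComplement D E) {k k' : ℕ} (hfst : h.fst k = h.fst k')
    (hsnd : h.snd k = h.snd k') : k = k' := by
  rw [← h.fst_add_snd k, ← h.fst_add_snd k', hfst, hsnd]

noncomputable def rep (h : IsAddComplement D E) (n : ℕ) : ℕ →₀ ℕ :=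
  ∑ k ∈ bits n, Finsupp.single (2 ^ h.fst k) (2 ^ h.snd k)

lemma sum_rep (h : IsAddComplement D E) (n : ℕ) : (h.rep n).sum (fun a m => m * a) = n := by
  rw [rep, ← Finsupp.sum_finsetSum_index (fun a => zero_mul a) (fun a x y => add_mul x y a)]
  conv_rhs => rw [← sum_two_pow_bits n]
  refine sum_congr rfl fun k _ => ?_
  rw [Finsupp.sum_single_index (zero_mul _), ← pow_add, add_comm, h.fst_add_snd]

lemma support_rep_subset (h : IsAddComplement D E) (n : ℕ) :
    ↑(h.rep n).support ⊆ (2 ^ ·) '' D := by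
  classical
  intro a ha
  obtain ⟨k, -, hk⟩ := mem_biUnion.1 (Finsupp.support_finsetSum ha)
  exact ⟨h.fst k, h.fst_mem k, (Finset.mem_singleton.1 (Finsupp.support_single_subset hk)).symm⟩

lemma bits_rep_apply_subset (h : IsAddComplement D E) (n a : ℕ) : ↑(bits (h.rep n a)) ⊆ E := by
  classical
  have hinj : Set.InjOn h.snd ({k ∈ bits n | 2 ^ h.fst k = a} : Finset ℕ) := by
    intro k hk k' hk' hsnd
    refine h.eq_of_fst_eq_of_snd_eq (Nat.pow_right_injective le_rfl ?_) hsnd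
    exact (mem_filter.1 hk).2.trans (mem_filter.1 hk').2.symm
  have hval : h.rep n a = ∑ e ∈ {k ∈ bits n | 2 ^ h.fst k = a}.image h.snd, 2 ^ e := by
    rw [sum_image hinj, sum_filter, rep, Finsupp.finsetSum_apply]
    simp only [Finsupp.single_apply]
  rw [hval, bits_sum_two_pow, coe_image]
  exact Set.image_subset_iff.2 fun k _ => h.snd_mem k

lemma sum_digitSet (h : IsAddComplement D E) {f : ℕ →₀ ℕ} (hA : ↑f.support ⊆ (2 ^ ·) '' D)
    (hE : ∀ a ∈ f.support, ↑(bits (f a)) ⊆ E) {β : Type*} [AddCommMonoid β] (G : ℕ → β) :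
    ∑ k ∈ digitSet f, G k = ∑ a ∈ f.support, ∑ e ∈ bits (f a), G (Nat.log 2 a + e) := by
  rw [digitSet, sum_image, sum_sigma]
  rintro ⟨a, e⟩ hx ⟨a', e'⟩ hx' heq
  obtain ⟨ha, he⟩ := mem_sigma.1 hx
  obtain ⟨ha', he'⟩ := mem_sigma.1 hx'
  obtain ⟨d, hd, rfl⟩ := hA ha
  obtain ⟨d', hd', rfl⟩ := hA ha'
  simp only [Nat.log_pow one_lt_two] at heq
  have h₁ := h.fst_snd_add hd (hE _ ha he)
  have h₂ := h.fst_snd_add hd' (hE _ ha' he')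
  rw [heq] at h₁
  obtain rfl : d = d' := h₁.1.symm.trans h₂.1
  obtain rfl : e = e' := h₁.2.symm.trans h₂.2
  rfl

lemma bits_sum_eq_digitSet (h : IsAddComplement D E) {f : ℕ →₀ ℕ}
    (hA : ↑f.support ⊆ (2 ^ ·) '' D) (hE : ∀ a ∈ f.support, ↑(bits (f a)) ⊆ E) :
    bits (f.sum fun a m => m * a) = digitSet f := by
  suffices f.sum (fun a m => m * a) = ∑ k ∈ digitSet f, 2 ^ k by rw [this, bits_sum_two_pow]
  rw [h.sum_digitSet hA hE, Finsupp.sum]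
  refine sum_congr rfl fun a ha => ?_
  obtain ⟨d, -, rfl⟩ := hA ha
  conv_lhs => rw [← sum_two_pow_bits (f (2 ^ d)), sum_mul]
  simp only [Nat.log_pow one_lt_two, pow_add, mul_comm]

lemma eq_rep (h : IsAddComplement D E) {f : ℕ →₀ ℕ} (hA : ↑f.support ⊆ (2 ^ ·) '' D)
    (hE : ∀ a ∈ f.support, ↑(bits (f a)) ⊆ E) :
    f = h.rep (f.sum fun a m => m * a) := by
  rw [rep, h.bits_sum_eq_digitSet hA hE, h.sum_digitSet hA hE]
  conv_lhs => rw [← Finsupp.sum_single f, Finsupp.sum]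
  refine sum_congr rfl fun a ha => ?_
  obtain ⟨d, hd, rfl⟩ := hA ha
  conv_lhs => rw [← sum_two_pow_bits (f (2 ^ d)), Finsupp.single_finsetSum]
  refine sum_congr rfl fun e he => ?_
  obtain ⟨hfst, hsnd⟩ := h.fst_snd_add hd (hE _ ha he)
  rw [Nat.log_pow one_lt_two, hfst, hsnd]

theorem pCount_eq_one (h : IsAddComplement D E) (n : ℕ) :
    pCount ((2 ^ ·) '' D) (bitsWithin E \ {0}) n = 1 := by
  rw [pCount, Set.ncard_eq_one]
  refine ⟨h.rep n, Set.eq_singleton_iff_unique_mem.2 ⟨⟨h.support_rep_subset n,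
    fun a ha => ⟨h.bits_rep_apply_subset n a, Finsupp.mem_support_iff.1 ha⟩, h.sum_rep n⟩, ?_⟩⟩
  rintro f ⟨hA, hM, rfl⟩
  exact h.eq_rep hA fun a ha => (hM a ha).1

end IsAddComplement

theorem stmt1 (B C : Set ℕ) (hdisj : Disjoint B C) (hunion : B ∪ C = Set.univ)
    (hB : B.Infinite) (hC : C.Infinite)
    (D E A M : Set ℕ)
    (hD : D = {n | ∃ s : Finset ℕ, ↑s ⊆ B ∧ n = ∑ i ∈ s, 2 ^ i})
    (hE : E = {n | ∃ s : Finset ℕ, ↑s ⊆ C ∧ n = ∑ j ∈ s, 2 ^ j})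
    (hA : A = {x | ∃ d ∈ D, x = 2 ^ d})
    (hM : M = {x | ∃ s : Finset ℕ, ↑s ⊆ E ∧ s.Nonempty ∧ x = ∑ e ∈ s, 2 ^ e}) :
    A.Infinite ∧ M.Infinite ∧ (∀ a ∈ A, 0 < a) ∧ (∀ m ∈ M, 0 < m) ∧
      ∀ n : ℕ, 0 < n → pCount A M n = 1 := by
  rw [setOf_sum_two_pow] at hD hE
  have hA' : A = (2 ^ ·) '' D := by
    rw [hA]
    ext x
    simp [eq_comm]
  rw [setOf_nonempty_sum_two_pow] at hM
  subst hD hE hA' hM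
  refine ⟨(bitsWithin_infinite hB).image (Nat.pow_right_injective le_rfl).injOn,
    (bitsWithin_infinite (bitsWithin_infinite hC)).sdiff (Set.finite_singleton 0), ?_,
    fun m hm => Nat.pos_of_ne_zero hm.2,
    fun n _ => (isAddComplement_bitsWithin hdisj hunion).pCount_eq_one n⟩
  rintro _ ⟨d, -, rfl⟩
  positivity
end

section
/- For every monotone function w : ℕ → ℕ tending to infinity, there exist infinite sets A and M of positive integers such that p(n,A,M) = 1 for every positive integer n, and |A ∩ {1,...,n}| ≥ (log₂ n)/w(n) for all sufficiently large n. -/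
/-!
Split binary digits according to a set `J ⊆ ℕ`: every `e` is uniquely `s + t`, where the binary
digits of `s` lie in `J` and those of `t` avoid `J`. Writing `n = ∑ 2^e` and `2^e = 2^s · 2^t`,
then grouping by `t`, gives `n = ∑ m_a · a` with `a = 2^t` and `m_a` a sum of distinct `2^s`;
conversely such a representation expands into the binary expansion of `n`, so it is unique.
Hence `A = {2^t}` and `M = {m > 0 : the binary digit positions of m have binary digits in J}`
give `p(n, A, M) = 1`.

If `J` is so sparse that `2^(|J ∩ [0, ρ)| + 1) ≤ w n` for `ρ ≤ n`, take `ρ = ⌊log₂(⌊log₂ n⌋ + 1)⌋`: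
the `2^(ρ - |J ∩ [0, ρ)|)` exponents `t < 2^ρ` avoiding `J` give elements `2^t ≤ n` of `A`, and
`log₂ n < 2^(ρ + 1) ≤ w n · 2^(ρ - |J ∩ [0, ρ)|)`. Taking `J` of even numbers keeps `A` and `M`
infinite.
-/

open Filter

open Finset

def bitsIn (J : Set ℕ) : Set ℕ := {s | ∀ i ∈ s.bitIndices, i ∈ J}

lemma mem_bitsIn {J : Set ℕ} {s : ℕ} : s ∈ bitsIn J ↔ ↑s.bitIndices.toFinset ⊆ J := by
  simp [bitsIn, Set.subset_def]

lemma sum_two_pow_mem_bitsIn {J : Set ℕ} {F : Finset ℕ} : ∑ i ∈ F, 2 ^ i ∈ bitsIn J ↔ ↑F ⊆ J := by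
  rw [mem_bitsIn, toFinset_bitIndices_sum_two_pow]

lemma two_pow_mem_bitsIn {J : Set ℕ} {j : ℕ} : 2 ^ j ∈ bitsIn J ↔ j ∈ J := by
  simp only [bitsIn, Set.mem_ofPred_eq, Nat.bitIndices_two_pow, List.mem_singleton, forall_eq]

lemma Set.Infinite.bitsIn {J : Set ℕ} (hJ : J.Infinite) : (bitsIn J).Infinite :=
  (hJ.image (Nat.pow_right_injective le_rfl).injOn).mono
    (Set.image_subset_iff.2 fun _ => two_pow_mem_bitsIn.2)

lemma bitIndices_toFinset_add {s t : ℕ}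
    (h : Disjoint s.bitIndices.toFinset t.bitIndices.toFinset) :
    (s + t).bitIndices.toFinset = s.bitIndices.toFinset ∪ t.bitIndices.toFinset := by
  conv_lhs => rw [← sum_toFinset_bitIndices_two_pow s, ← sum_toFinset_bitIndices_two_pow t,
    ← sum_union h, toFinset_bitIndices_sum_two_pow]

lemma filter_bitIndices_add_of_mem_bitsIn {J : Set ℕ} [DecidablePred (· ∈ J)] {s t : ℕ}
    (hs : s ∈ bitsIn J) (ht : t ∈ bitsIn Jᶜ) :
    (s + t).bitIndices.toFinset.filter (· ∈ J) = s.bitIndices.toFinset := by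
  rw [mem_bitsIn] at hs ht
  rw [bitIndices_toFinset_add (Finset.disjoint_left.2 fun i his hit => ht hit (hs his)),
    filter_union, filter_true_of_mem fun i hi => hs hi,
    filter_false_of_mem fun i hi => ht hi, union_empty]

lemma bijOn_add_bitsIn_compl (J : Set ℕ) :
    Set.BijOn (fun p : ℕ × ℕ => p.1 + p.2) (bitsIn J ×ˢ bitsIn Jᶜ) Set.univ := by
  classical
  refine ⟨Set.mapsTo_univ _ _, ?_, fun e _ => ?_⟩
  · rintro ⟨s, t⟩ ⟨hs, ht⟩ ⟨s', t'⟩ ⟨hs', ht'⟩ h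
    simp only at h
    have hss' : s = s' := equivBitIndices.injective <|
      show s.bitIndices.toFinset = s'.bitIndices.toFinset by
        rw [← filter_bitIndices_add_of_mem_bitsIn hs ht, h,
          filter_bitIndices_add_of_mem_bitsIn hs' ht']
    simp only [Prod.mk.injEq]
    omega
  · have hs : ∑ i ∈ e.bitIndices.toFinset.filter (· ∈ J), 2 ^ i ∈ bitsIn J :=
      sum_two_pow_mem_bitsIn.2 fun i hi => (mem_filter.1 hi).2
    have ht : ∑ i ∈ e.bitIndices.toFinset.filter (· ∉ J), 2 ^ i ∈ bitsIn Jᶜ :=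
      sum_two_pow_mem_bitsIn.2 fun i hi => (mem_filter.1 hi).2
    exact ⟨(_, _), ⟨hs, ht⟩,
      (sum_filter_add_sum_filter_not _ _ _).trans (sum_toFinset_bitIndices_two_pow e)⟩

lemma Finsupp.sum_single_two_pow_bitIndices {α : Type*} (f : α →₀ ℕ) :
    ∑ x ∈ f.support.sigma (fun a => (f a).bitIndices.toFinset), single x.1 (2 ^ x.2) = f := by
  conv_rhs => rw [← f.sum_single]
  rw [Finsupp.sum, sum_sigma]
  refine Finset.sum_congr rfl fun a _ => ?_
  rw [← single_finsetSum, sum_toFinset_bitIndices_two_pow]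

lemma Finsupp.sum_finsetSum_single_mul {ι : Type*} (s : Finset ι) (a m : ι → ℕ) :
    (∑ x ∈ s, single (a x) (m x)).sum (fun a m => m * a) = ∑ x ∈ s, m x * a x := by
  rw [← sum_finsetSum_index (fun _ => zero_mul _) fun _ _ _ => add_mul _ _ _]
  exact Finset.sum_congr rfl fun x _ => sum_single_index (zero_mul _)

section Representation

variable {S T : Set ℕ}

noncomputable def splitAdd (S T : Set ℕ) : ℕ → ℕ × ℕ :=
  Function.invFunOn (fun p : ℕ × ℕ => p.1 + p.2) (S ×ˢ T)

noncomputable def splitRep (S T : Set ℕ) (n : ℕ) : ℕ →₀ ℕ :=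
  ∑ e ∈ n.bitIndices.toFinset, Finsupp.single (2 ^ (splitAdd S T e).2) (2 ^ (splitAdd S T e).1)

variable (hST : Set.BijOn (fun p : ℕ × ℕ => p.1 + p.2) (S ×ˢ T) Set.univ)
include hST

lemma splitAdd_mem (e : ℕ) : splitAdd S T e ∈ S ×ˢ T :=
  Function.invFunOn_mem (hST.surjOn trivial)

lemma splitAdd_fst_add_snd (e : ℕ) : (splitAdd S T e).1 + (splitAdd S T e).2 = e :=
  Function.invFunOn_eq (hST.surjOn trivial)

lemma splitAdd_add {s t : ℕ} (hs : s ∈ S) (ht : t ∈ T) : splitAdd S T (s + t) = (s, t) :=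
  hST.injOn.leftInvOn_invFunOn (Set.mk_mem_prod hs ht)

lemma splitRep_sum (n : ℕ) : (splitRep S T n).sum (fun a m => m * a) = n := by
  rw [splitRep, Finsupp.sum_finsetSum_single_mul]
  simp_rw [← pow_add, splitAdd_fst_add_snd hST]
  exact sum_toFinset_bitIndices_two_pow n

lemma support_splitRep_subset (n : ℕ) : ↑(splitRep S T n).support ⊆ (2 ^ ·) '' T := by
  classical
  intro a ha
  obtain ⟨e, -, hae⟩ := mem_biUnion.1 (Finsupp.support_finsetSum ha)
  exact ⟨_, (splitAdd_mem hST e).2, (mem_singleton.1 (Finsupp.support_single_subset hae)).symm⟩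

lemma splitRep_apply_mem_bitsIn (n a : ℕ) : splitRep S T n a ∈ bitsIn S := by
  classical
  set F := n.bitIndices.toFinset.filter fun e => 2 ^ (splitAdd S T e).2 = a
  have hinj : Set.InjOn (fun e => (splitAdd S T e).1) F := by
    intro e he e' he' h
    have hsnd : (splitAdd S T e).2 = (splitAdd S T e').2 :=
      Nat.pow_right_injective le_rfl ((mem_filter.1 he).2.trans (mem_filter.1 he').2.symm)
    rw [← splitAdd_fst_add_snd hST e, ← splitAdd_fst_add_snd hST e']
    exact congrArg₂ _ h hsnd
  have hval : splitRep S T n a = ∑ s ∈ F.image fun e => (splitAdd S T e).1, 2 ^ s := by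
    rw [sum_image hinj, splitRep, Finsupp.finsetSum_apply, sum_filter]
    exact sum_congr rfl fun e _ => Finsupp.single_apply
  rw [hval, sum_two_pow_mem_bitsIn, coe_image]
  exact Set.image_subset_iff.2 fun e _ => (splitAdd_mem hST e).1

lemma eq_splitRep {f : ℕ →₀ ℕ} (hA : ↑f.support ⊆ (2 ^ ·) '' T)
    (hM : ∀ a ∈ f.support, f a ∈ bitsIn S) : f = splitRep S T (f.sum fun a m => m * a) := by
  set P := f.support.sigma fun a => (f a).bitIndices.toFinset
  have hP : ∀ x ∈ P, x.1 = 2 ^ Nat.log 2 x.1 ∧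
      splitAdd S T (x.2 + Nat.log 2 x.1) = (x.2, Nat.log 2 x.1) := by
    rintro ⟨a, s⟩ hx
    rw [mem_sigma] at hx
    obtain ⟨t, ht, rfl⟩ := hA hx.1
    rw [Nat.log_pow one_lt_two]
    exact ⟨rfl, splitAdd_add hST (mem_bitsIn.1 (hM _ hx.1) hx.2) ht⟩
  set bitPos : (_ : ℕ) × ℕ → ℕ := fun x => x.2 + Nat.log 2 x.1
  have hinj : Set.InjOn bitPos P := by
    intro x hx y hy hxy
    have h := (hP x hx).2
    rw [show x.2 + Nat.log 2 x.1 = y.2 + Nat.log 2 y.1 from hxy, (hP y hy).2] at h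
    obtain ⟨h2, h1⟩ := Prod.mk.inj h
    exact Sigma.ext (by rw [(hP x hx).1, (hP y hy).1, h1]) (heq_of_eq h2.symm)
  have hsum : f.sum (fun a m => m * a) = ∑ e ∈ P.image bitPos, 2 ^ e := by
    conv_lhs => rw [← f.sum_single_two_pow_bitIndices]
    rw [Finsupp.sum_finsetSum_single_mul, sum_image hinj]
    exact sum_congr rfl fun x hx => by rw [pow_add, ← (hP x hx).1]
  rw [splitRep, hsum, toFinset_bitIndices_sum_two_pow, sum_image hinj]
  conv_lhs => rw [← f.sum_single_two_pow_bitIndices]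
  exact sum_congr rfl fun x hx => by rw [(hP x hx).2, ← (hP x hx).1]

theorem pCount_image_two_pow_bitsIn (n : ℕ) : pCount ((2 ^ ·) '' T) (bitsIn S \ {0}) n = 1 := by
  rw [pCount, Set.ncard_eq_one]
  refine ⟨splitRep S T n, Set.eq_singleton_iff_unique_mem.2 ⟨⟨support_splitRep_subset hST n,
    fun a ha => ⟨splitRep_apply_mem_bitsIn hST n a, Finsupp.mem_support_iff.1 ha⟩,
    splitRep_sum hST n⟩, ?_⟩⟩
  rintro f ⟨hA, hM, rfl⟩
  exact eq_splitRep hST hA fun a ha => (hM a ha).1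

end Representation

lemma two_pow_card_le_ncard_inter_Icc {J : Set ℕ} {R : Finset ℕ} {n : ℕ} (hRJ : ∀ i ∈ R, i ∉ J)
    (hRn : 2 ^ ∑ i ∈ R, 2 ^ i ≤ n) :
    2 ^ #R ≤ ((2 ^ ·) '' bitsIn Jᶜ ∩ Set.Icc 1 n).ncard := by
  have hinj : Function.Injective fun F : Finset ℕ => 2 ^ ∑ i ∈ F, 2 ^ i :=
    (Nat.pow_right_injective le_rfl).comp (geomSum_injective le_rfl)
  rw [← card_powerset, ← card_image_of_injective _ hinj, ← Set.ncard_coe_finset]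
  refine Set.ncard_le_ncard ?_ ((Set.finite_Icc 1 n).inter_of_right _)
  intro a ha
  obtain ⟨F, hF, rfl⟩ := mem_image.1 ha
  rw [mem_powerset] at hF
  exact ⟨⟨_, sum_two_pow_mem_bitsIn.2 fun i hi => hRJ i (hF hi), rfl⟩, Nat.one_le_two_pow,
    (Nat.pow_le_pow_right two_pos (sum_le_sum_of_subset hF)).trans hRn⟩

open Classical in
lemma exists_infinite_even_set_two_pow_card_le {w : ℕ → ℕ} (hw : Tendsto w atTop atTop) :
    ∃ J : Set ℕ, J.Infinite ∧ (∀ i ∈ J, Even i) ∧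
      ∀ᶠ n in atTop, ∀ ρ ≤ n, 2 ^ (#{i ∈ range ρ | i ∈ J} + 1) ≤ w n := by
  choose B hB using fun k => eventually_atTop.1 (hw.eventually_ge_atTop (2 ^ (k + 2)))
  set j : ℕ → ℕ := fun k => 2 * (B k + k)
  refine ⟨Set.range j,
    Set.infinite_of_forall_exists_gt fun k => ⟨j (k + 1), ⟨_, rfl⟩, by simp only [j]; omega⟩,
    fun _ ⟨k, hk⟩ => hk ▸ even_two_mul _, ?_⟩
  filter_upwards [eventually_ge_atTop (B 0)] with n hn ρ hρ
  set L := Nat.log 2 (w n)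
  have hw4 : 2 ^ 2 ≤ w n := hB 0 n hn
  have hL : 2 ≤ L := Nat.le_log_of_pow_le one_lt_two hw4
  have hsub : {i ∈ range ρ | i ∈ Set.range j} ⊆ (range (L - 1)).image j := by
    intro i hi
    obtain ⟨hiρ, k, rfl⟩ := mem_filter.1 hi
    have hk : k + 2 ≤ L :=
      Nat.le_log_of_pow_le one_lt_two (hB k n (by simp only [mem_range, j] at hiρ; omega))
    exact mem_image_of_mem j (mem_range.2 (by omega))
  calc 2 ^ (#{i ∈ range ρ | i ∈ Set.range j} + 1)
      ≤ 2 ^ L := by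
        have := (card_le_card hsub).trans card_image_le
        rw [card_range] at this
        apply Nat.pow_le_pow_right two_pos
        omega
    _ ≤ w n := Nat.pow_log_le_self 2 (by omega)

open Classical in
lemma eventually_logb_div_le_ncard {w : ℕ → ℕ} {J : Set ℕ}
    (hJ : ∀ᶠ n in atTop, ∀ ρ ≤ n, 2 ^ (#{i ∈ range ρ | i ∈ J} + 1) ≤ w n) :
    ∀ᶠ n : ℕ in atTop, Real.logb 2 n / w n ≤ ((2 ^ ·) '' bitsIn Jᶜ ∩ Set.Icc 1 n).ncard := by
  filter_upwards [hJ, eventually_ge_atTop 1] with n hJn hn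
  set r := Nat.log 2 n
  set ρ := Nat.log 2 (r + 1)
  have hρ : 2 ^ ρ ≤ r + 1 := Nat.pow_log_le_self 2 r.succ_ne_zero
  have hr : 2 ^ r ≤ n := Nat.pow_log_le_self 2 (by omega)
  have hρn : ρ ≤ n := by
    have := ρ.lt_two_pow_self
    have := r.lt_two_pow_self
    omega
  set R := {i ∈ range ρ | i ∉ J}
  have hR : 2 ^ ∑ i ∈ R, 2 ^ i ≤ n := by
    have : ∑ i ∈ R, 2 ^ i < 2 ^ ρ := (sum_le_sum_of_subset (filter_subset _ _)).trans_lt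
      (Nat.geomSum_lt le_rfl fun _ => mem_range.1)
    exact (Nat.pow_le_pow_right two_pos (by omega)).trans hr
  have hA := two_pow_card_le_ncard_inter_Icc (fun i hi => (mem_filter.1 hi).2) hR
  have hwn := hJn ρ hρn
  have hcard : #R + (#{i ∈ range ρ | i ∈ J} + 1) = ρ + 1 := by
    rw [← add_assoc, add_comm #R, card_filter_add_card_filter_not, card_range]
  have hw0 : (0 : ℝ) < w n := by exact_mod_cast (Nat.two_pow_pos _).trans_le hwn
  rw [div_le_iff₀ hw0]
  calc Real.logb 2 n
      ≤ r + 1 := by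
        have := Nat.lt_floor_add_one (Real.logb 2 n)
        rw [show (2 : ℝ) = (2 : ℕ) by norm_num, Real.natFloor_logb_natCast] at this
        exact this.le
    _ ≤ (2 ^ (ρ + 1) : ℕ) := by exact_mod_cast (Nat.lt_pow_succ_log_self one_lt_two _).le
    _ ≤ _ := by
        rw [← hcard, pow_add]
        exact_mod_cast Nat.mul_le_mul hA hwn

theorem stmt3_general (w : ℕ → ℕ) (hw : Tendsto w atTop atTop) :
    ∃ A M : Set ℕ, A.Infinite ∧ M.Infinite ∧ (∀ a ∈ A, 0 < a) ∧ (∀ m ∈ M, 0 < m) ∧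
      (∀ n : ℕ, 0 < n → pCount A M n = 1) ∧
      (∀ᶠ n : ℕ in atTop,
        Real.logb 2 n / (w n : ℝ) ≤ ((A ∩ Set.Icc 1 n).ncard : ℝ)) := by
  obtain ⟨J, hJ, hJeven, hJsparse⟩ := exists_infinite_even_set_two_pow_card_le hw
  have hJc : Jᶜ.Infinite := Set.infinite_of_injective_forall_mem (f := fun k => 2 * k + 1)
    (fun a b h => by simpa using h) fun k hk => k.not_even_two_mul_add_one (hJeven _ hk)
  refine ⟨(2 ^ ·) '' bitsIn Jᶜ, bitsIn (bitsIn J) \ {0},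
    hJc.bitsIn.image (Nat.pow_right_injective le_rfl).injOn,
    hJ.bitsIn.bitsIn.sdiff (Set.finite_singleton 0), ?_, fun m hm => Nat.pos_of_ne_zero hm.2,
    fun n _ => pCount_image_two_pow_bitsIn (bijOn_add_bitsIn_compl J) n,
    eventually_logb_div_le_ncard hJsparse⟩
  rintro _ ⟨t, -, rfl⟩
  positivity

theorem stmt3 (w : ℕ → ℕ) (hmono : Monotone w) (hw : Tendsto w atTop atTop) :
    ∃ A M : Set ℕ, A.Infinite ∧ M.Infinite ∧ (∀ a ∈ A, 0 < a) ∧ (∀ m ∈ M, 0 < m) ∧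
      (∀ n : ℕ, 0 < n → pCount A M n = 1) ∧
      (∀ᶠ n : ℕ in atTop,
        Real.logb 2 n / (w n : ℝ) ≤ ((A ∩ Set.Icc 1 n).ncard : ℝ)) :=
  stmt3_general w hw
end

section
/- Let A be an infinite set of positive integers with 1 ∈ A such that |A ∩ {1,...,n}| = (1+o(1)) · (log n)/(log log n) as n → ∞. Then for every ε > 0 there exist an integer n₀ and an infinite set M of positive integers such that 0 < p(n,A,M) ≤ n^{8+ε} for all n > n₀. -/
/-!
Enumerate `A` as `1 = a 0 < a 1 < ⋯` and build a mixed-radix number system: with capacities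
`C 0 = C₀`, `C (t + 1) = C t + B t * W t * a (t + 1)`, weights `W t = ⌊(C t + 1) / a (t + 1)⌋`
and digit bounds `B t = (log₂ C t) ^ 6`, every `n ≤ C (t + 1)` is `d * W t * a (t + 1) + r`
with `d ≤ B t` and `r ≤ C t`. So, greedily, every `n` is represented with multiplicities in
`M = [1, C₀] ∪ {d * W t | 1 ≤ d ≤ B t}`.

The capacities grow by a factor `(log C t) ^ 5` per step, which by the density hypothesis is
fast enough to keep `a (t + 1) ≤ √(C t)`. Hence `W t ≥ √(C t) ≥ 2 ^ (t / 2)`, only `O(log n)`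
blocks of digits meet `[1, n]`, and `|M ∩ [1, n]| = O((log n) ^ 7)`. Finally
`p(n, A, M) ≤ (1 + |M ∩ [1, n]|) ^ |A ∩ [1, n]| = exp ((7 + o(1)) · 1.01 · log n) ≤ n ^ 8`.
-/

open Filter

namespace RestrictedPartition

open Real

def representations (A M : Set ℕ) (n : ℕ) : Set (ℕ →₀ ℕ) :=
  {f | ↑f.support ⊆ A ∧ (∀ a ∈ f.support, f a ∈ M) ∧ f.sum (fun a m => m * a) = n}

lemma pCount_eq_ncard_representations (A M : Set ℕ) (n : ℕ) :
    pCount A M n = (representations A M n).ncard := rfl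

lemma representations_mono {A A' M M' : Set ℕ} (hA : A ⊆ A') (hM : M ⊆ M') (n : ℕ) :
    representations A M n ⊆ representations A' M' n :=
  fun _ ⟨hs, hv, hn⟩ => ⟨hs.trans hA, fun a ha => hM (hv a ha), hn⟩

lemma zero_mem_representations (A M : Set ℕ) : (0 : ℕ →₀ ℕ) ∈ representations A M 0 := by
  simp [representations]

lemma add_single_mem_representations {A M : Set ℕ} {n x m : ℕ} {f : ℕ →₀ ℕ}
    (hf : f ∈ representations A M n) (hx : x ∉ A) (hm : m ∈ M) :
    f + Finsupp.single x m ∈ representations (insert x A) M (n + m * x) := by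
  obtain ⟨hs, hv, rfl⟩ := hf
  have hfx : f x = 0 := Finsupp.notMem_support_iff.mp fun h => hx (hs h)
  refine ⟨?_, fun a ha => ?_, ?_⟩
  · refine (Finset.coe_subset.mpr Finsupp.support_add).trans ?_
    rw [Finset.coe_union]
    exact Set.union_subset (hs.trans (Set.subset_insert x A))
      ((Finset.coe_subset.mpr Finsupp.support_single_subset).trans (by simp))
  · by_cases hax : a = x
    · subst hax; simpa [hfx] using hm
    · have hfa : (f + Finsupp.single x m) a = f a := by simp [Ne.symm hax]
      rw [Finsupp.mem_support_iff, hfa] at ha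
      exact hfa ▸ hv a (Finsupp.mem_support_iff.mpr ha)
  · rw [Finsupp.sum_add_index' (fun _ => zero_mul _) (fun _ _ _ => add_mul _ _ _),
      Finsupp.sum_single_index (zero_mul _)]

section Counting

variable {A M : Set ℕ} {n : ℕ}

lemma mul_le_of_mem_representations {f : ℕ →₀ ℕ} (hf : f ∈ representations A M n) {a : ℕ}
    (ha : a ∈ f.support) : f a * a ≤ n :=
  hf.2.2 ▸ Finset.single_le_sum (f := fun a => f a * a) (fun _ _ => Nat.zero_le _) ha

variable (hA : ∀ a ∈ A, 0 < a) (hM : ∀ m ∈ M, 0 < m)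
include hA hM

lemma representations_subset_finsupp :
    representations A M n ⊆ ((Set.finite_Icc 1 n).inter_of_right A).toFinset.finsupp
      fun _ => insert 0 ((Set.finite_Icc 1 n).inter_of_right M).toFinset := by
  intro f hf
  rw [Finset.mem_coe, Finset.mem_finsupp_iff]
  have hbound : ∀ a ∈ f.support, a ∈ A ∧ f a ∈ M ∧ a ≤ n ∧ f a ≤ n := by
    intro a ha
    have haA : a ∈ A := hf.1 ha
    have hfa : f a ∈ M := hf.2.1 a ha
    have := mul_le_of_mem_representations hf ha
    exact ⟨haA, hfa, le_trans (Nat.le_mul_of_pos_left a (hM _ hfa)) this,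
      le_trans (Nat.le_mul_of_pos_right _ (hA a haA)) this⟩
  refine ⟨fun a ha => ?_, fun a _ => ?_⟩
  · obtain ⟨haA, -, han, -⟩ := hbound a ha
    simpa using ⟨haA, hA a haA, han⟩
  · by_cases ha : a ∈ f.support
    · obtain ⟨-, hfa, -, hfan⟩ := hbound a ha
      simpa using Or.inr ⟨hfa, hM _ hfa, hfan⟩
    · simp [Finsupp.notMem_support_iff.mp ha]

lemma finite_representations : (representations A M n).Finite :=
  Set.Finite.subset (Finset.finite_toSet _) (representations_subset_finsupp hA hM)

lemma ncard_representations_le :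
    (representations A M n).ncard ≤
      (1 + (M ∩ Set.Icc 1 n).ncard) ^ (A ∩ Set.Icc 1 n).ncard := by
  refine (Set.ncard_le_ncard (representations_subset_finsupp hA hM)
    (Finset.finite_toSet _)).trans ?_
  rw [Set.ncard_coe_finset, Finset.card_finsupp, Finset.prod_const,
    Set.ncard_eq_toFinset_card _ ((Set.finite_Icc 1 n).inter_of_right A),
    Set.ncard_eq_toFinset_card _ ((Set.finite_Icc 1 n).inter_of_right M), add_comm 1]
  exact Nat.pow_le_pow_left (Finset.card_insert_le _ _) _

end Counting

section Enumeration

variable {A : Set ℕ}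

lemma nth_le_of_lt_ncard {k y : ℕ} (h : k < (A ∩ Set.Icc 1 y).ncard) :
    Nat.nth (· ∈ A) k ≤ y := by
  classical
  refine Nat.lt_succ_iff.mp (Nat.nth_lt_of_lt_count (h.trans_le ?_))
  rw [Nat.count_eq_card_filter_range, ← Set.ncard_coe_finset]
  refine Set.ncard_le_ncard (fun x hx => ?_) (Finset.finite_toSet _)
  simpa [Nat.lt_succ_iff] using ⟨hx.2.2, hx.1⟩

lemma nth_zero_eq_one (hApos : ∀ a ∈ A, 0 < a) (h1 : 1 ∈ A) : Nat.nth (· ∈ A) 0 = 1 := by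
  rw [Nat.nth_zero]
  exact le_antisymm (Nat.sInf_le h1) (hApos _ (Nat.sInf_mem ⟨1, h1⟩))

end Enumeration

def digitSet (C₀ : ℕ) (W B : ℕ → ℕ) : Set ℕ :=
  Set.Icc 1 C₀ ∪ ⋃ t, (· * W t) '' Set.Icc 1 (B t)

lemma exists_digit {n C B V : ℕ} (hV : V ≤ C + 1) (hn : n ≤ C + B * V) :
    ∃ d ≤ B, d * V ≤ n ∧ n - d * V ≤ C := by
  rcases le_or_gt B (n / V) with hB | hB
  · have hBV : B * V ≤ n := (Nat.mul_le_mul_right V hB).trans (Nat.div_mul_le_self n V)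
    exact ⟨B, le_rfl, hBV, by omega⟩
  · refine ⟨n / V, hB.le, Nat.div_mul_le_self n V, ?_⟩
    rcases Nat.eq_zero_or_pos V with rfl | hV0
    · simpa using hn
    · have := Nat.div_add_mod' n V
      have := Nat.mod_lt n hV0
      omega

theorem representations_nonempty_of_le {a C W B : ℕ → ℕ} (ha0 : a 0 = 1)
    (ha : Function.Injective a)
    (hC : ∀ t, C (t + 1) = C t + B t * (W t * a (t + 1)))
    (hW : ∀ t, W t * a (t + 1) ≤ C t + 1) :
    ∀ t n, n ≤ C t → (representations (a '' Set.Iic t) (digitSet (C 0) W B) n).Nonempty := by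
  intro t
  induction t with
  | zero =>
    intro n hn
    rcases Nat.eq_zero_or_pos n with rfl | hn0
    · exact ⟨0, zero_mem_representations _ _⟩
    · have := add_single_mem_representations (zero_mem_representations ∅ (digitSet (C 0) W B))
        (Set.notMem_empty 1) (Or.inl ⟨hn0, hn⟩ : n ∈ digitSet (C 0) W B)
      refine ⟨_, representations_mono ?_ le_rfl _ (by simpa using this)⟩
      simp [ha0]
  | succ t ih =>
    intro n hn
    obtain ⟨d, hdB, hdn, hr⟩ := exists_digit (hW t) (hC t ▸ hn)
    obtain ⟨f, hf⟩ := ih _ hr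
    have hsub : a '' Set.Iic t ⊆ a '' Set.Iic (t + 1) :=
      Set.image_mono (Set.Iic_subset_Iic.mpr t.le_succ)
    rcases Nat.eq_zero_or_pos d with rfl | hd0
    · exact ⟨f, representations_mono hsub le_rfl _ (by simpa using hf)⟩
    · have hnew : a (t + 1) ∉ a '' Set.Iic t := by
        rintro ⟨s, hs, hst⟩
        exact absurd (ha hst) (by simp at hs; omega)
      have hdig : d * W t ∈ digitSet (C 0) W B :=
        Or.inr (Set.mem_iUnion.mpr ⟨t, d, ⟨hd0, hdB⟩, rfl⟩)
      have := add_single_mem_representations hf hnew hdig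
      rw [mul_assoc, Nat.sub_add_cancel hdn] at this
      have hins : insert (a (t + 1)) (a '' Set.Iic t) ⊆ a '' Set.Iic (t + 1) :=
        Set.insert_subset (Set.mem_image_of_mem a (Set.mem_Iic.mpr le_rfl)) hsub
      exact ⟨_, representations_mono hins le_rfl _ this⟩

section Capacity

variable (a : ℕ → ℕ) (C₀ : ℕ)

def capacity : ℕ → ℕ
  | 0 => C₀
  | t + 1 => capacity t + Nat.log 2 (capacity t) ^ 6 * ((capacity t + 1) / a (t + 1) * a (t + 1))

def weight (t : ℕ) : ℕ := (capacity a C₀ t + 1) / a (t + 1)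

def digitBound (t : ℕ) : ℕ := Nat.log 2 (capacity a C₀ t) ^ 6

lemma capacity_succ (t : ℕ) : capacity a C₀ (t + 1) =
    capacity a C₀ t + digitBound a C₀ t * (weight a C₀ t * a (t + 1)) := rfl

lemma weight_mul_le (t : ℕ) : weight a C₀ t * a (t + 1) ≤ capacity a C₀ t + 1 :=
  Nat.div_mul_le_self _ _

lemma capacity_mono : Monotone (capacity a C₀) :=
  monotone_nat_of_le_succ fun t => by rw [capacity_succ]; exact Nat.le_add_right _ _

lemma le_capacity (t : ℕ) : C₀ ≤ capacity a C₀ t := capacity_mono a C₀ t.zero_le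

lemma two_le_log_two {C : ℕ} (h : 4 ≤ C) : 2 ≤ Nat.log 2 C :=
  Nat.le_log_of_pow_le (by norm_num) h

variable {a C₀} {t : ℕ} (hpos : 0 < a (t + 1)) (hsq : a (t + 1) ^ 2 ≤ capacity a C₀ t)
include hpos hsq

lemma sqrt_capacity_le_weight : Nat.sqrt (capacity a C₀ t) ≤ weight a C₀ t := by
  rw [weight, Nat.le_div_iff_mul_le hpos]
  have hle : a (t + 1) ≤ Nat.sqrt (capacity a C₀ t) := Nat.le_sqrt'.mpr hsq
  calc Nat.sqrt (capacity a C₀ t) * a (t + 1)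
      ≤ Nat.sqrt (capacity a C₀ t) * Nat.sqrt (capacity a C₀ t) := Nat.mul_le_mul_left _ hle
    _ ≤ capacity a C₀ t + 1 := (Nat.sqrt_le _).trans (Nat.le_succ _)

lemma capacity_succ_le_two_mul_weight_mul :
    capacity a C₀ t + 1 ≤ 2 * (weight a C₀ t * a (t + 1)) := by
  have hdiv := Nat.div_add_mod' (capacity a C₀ t + 1) (a (t + 1))
  have hmod := Nat.mod_lt (capacity a C₀ t + 1) hpos
  have : 2 * a (t + 1) ≤ capacity a C₀ t + 2 := by nlinarith
  rw [weight]
  omega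

lemma capacity_mul_log_pow_le (h4 : 4 ≤ capacity a C₀ t) :
    capacity a C₀ t * Nat.log 2 (capacity a C₀ t) ^ 5 ≤ capacity a C₀ (t + 1) := by
  have hV := capacity_succ_le_two_mul_weight_mul hpos hsq
  have hL := two_le_log_two h4
  rw [capacity_succ, digitBound]
  set L := Nat.log 2 (capacity a C₀ t)
  have : 2 * (capacity a C₀ t * L ^ 5) ≤ 2 * (L ^ 6 * (weight a C₀ t * a (t + 1))) :=
    calc 2 * (capacity a C₀ t * L ^ 5) ≤ L * (capacity a C₀ t * L ^ 5) :=
          Nat.mul_le_mul_right _ hL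
      _ = L ^ 6 * capacity a C₀ t := by ring
      _ ≤ L ^ 6 * (capacity a C₀ t + 1) := Nat.mul_le_mul_left _ (Nat.le_succ _)
      _ ≤ L ^ 6 * (2 * (weight a C₀ t * a (t + 1))) := Nat.mul_le_mul_left _ hV
      _ = 2 * (L ^ 6 * (weight a C₀ t * a (t + 1))) := by ring
  omega

lemma two_mul_capacity_le (h4 : 4 ≤ capacity a C₀ t) :
    2 * capacity a C₀ t ≤ capacity a C₀ (t + 1) := by
  have hL : 2 ≤ Nat.log 2 (capacity a C₀ t) ^ 5 :=
    (two_le_log_two h4).trans (Nat.le_self_pow (by norm_num) _)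
  nlinarith [capacity_mul_log_pow_le hpos hsq h4]

end Capacity

lemma capacity_succ_le {a : ℕ → ℕ} {C₀ t : ℕ} (h4 : 4 ≤ capacity a C₀ t) :
    capacity a C₀ (t + 1) ≤ 2 * capacity a C₀ t * Nat.log 2 (capacity a C₀ t) ^ 6 := by
  have hV := weight_mul_le a C₀ t
  have hL : 2 ^ 6 ≤ Nat.log 2 (capacity a C₀ t) ^ 6 := Nat.pow_le_pow_left (two_le_log_two h4) 6
  rw [capacity_succ, digitBound]
  nlinarith [Nat.mul_le_mul_left (Nat.log 2 (capacity a C₀ t) ^ 6) hV]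

lemma six_le_log_of_le {u : ℝ} (hu : 700 ≤ u) : 6 ≤ log u := by
  have he : exp 1 ^ 6 ≤ (2.7182818286 : ℝ) ^ 6 :=
    pow_le_pow_left₀ (exp_pos 1).le exp_one_lt_d9.le 6
  rw [← exp_nat_mul, Nat.cast_ofNat, mul_one] at he
  rw [le_log_iff_exp_le (by linarith)]
  norm_num at he
  linarith

lemma log_le_natLog_two {x : ℕ} (hx : 3 ≤ log x) : log x ≤ Nat.log 2 x := by
  have hfloor : logb 2 x < Nat.log 2 x + 1 := by
    rw [← natFloor_logb_natCast]
    exact Nat.lt_floor_add_one _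
  rw [logb, div_lt_iff₀ (log_pos one_lt_two)] at hfloor
  nlinarith [log_two_lt_d9]

lemma natLog_two_le (x : ℕ) : (Nat.log 2 x : ℝ) ≤ 3 / 2 * log x := by
  have h := natLog_le_logb x 2
  rw [Nat.cast_ofNat, logb, le_div_iff₀ (log_pos one_lt_two)] at h
  nlinarith [log_two_gt_d9, log_natCast_nonneg x]

lemma div_log_add_le {u v : ℝ} (hu : 700 ≤ u) (hv₁ : u + 5 * log u ≤ v)
    (hv₂ : v ≤ u + 7 * log u) : (u - 2) / (2 * log u) + 3 / 2 ≤ (v - 2) / (2 * log v) := by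
  have hS : 6 ≤ log u := six_le_log_of_le hu
  set S := log u
  set q := 7 * S / u
  have hq0 : 0 ≤ q := by positivity
  have hqu : q * u = 7 * S := div_mul_cancel₀ _ (by linarith)
  have hq : q ≤ S / 100 := by nlinarith
  have hT₁ : S ≤ log v := log_le_log (by linarith) (by linarith)
  have hT₂ : log v ≤ S + q := by
    have h : log v ≤ log (u * (1 + q)) := log_le_log (by linarith) (by nlinarith)
    rw [log_mul (by linarith) (by linarith)] at h
    linarith [log_le_sub_one_of_pos (show 0 < 1 + q by linarith)]
  have hkey : (u - 2 + 3 * S) * log v ≤ (v - 2) * S := by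
    nlinarith [mul_le_mul_of_nonneg_left hT₂ (show 0 ≤ u - 2 + 3 * S by linarith)]
  rw [div_add' _ _ _ (by linarith), div_le_div_iff₀ (by linarith) (by linarith)]
  nlinarith

noncomputable def halfLogRatio (x : ℕ) : ℝ := (log x - 2) / (2 * log (log x))

lemma halfLogRatio_add_le {x y : ℕ} (hx : 700 ≤ log x) (hy₁ : x * Nat.log 2 x ^ 5 ≤ y)
    (hy₂ : y ≤ 2 * x * Nat.log 2 x ^ 6) : halfLogRatio x + 3 / 2 ≤ halfLogRatio y := by
  have hL₁ := log_le_natLog_two (x := x) (by linarith)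
  have hL₂ := natLog_two_le x
  have hS : 6 ≤ log (log x) := six_le_log_of_le hx
  have hx0 : (0 : ℝ) < x := by exact_mod_cast Nat.pos_of_ne_zero (by rintro rfl; norm_num at hx)
  have hL0 : (0 : ℝ) < Nat.log 2 x := by linarith
  have hy₁' : (x : ℝ) * (Nat.log 2 x : ℝ) ^ 5 ≤ y := by exact_mod_cast hy₁
  have hy₂' : (y : ℝ) ≤ 2 * x * (Nat.log 2 x : ℝ) ^ 6 := by exact_mod_cast hy₂
  have hlogL₁ : log (log x) ≤ log (Nat.log 2 x) := log_le_log (by linarith) hL₁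
  have hlogL₂ : log (Nat.log 2 x) ≤ log (3 / 2) + log (log x) := by
    rw [← log_mul (by norm_num) (by linarith)]
    exact log_le_log (by linarith) hL₂
  have hx5 : (0 : ℝ) < x * (Nat.log 2 x : ℝ) ^ 5 := mul_pos hx0 (pow_pos hL0 5)
  have hv₁ : log x + 5 * log (log x) ≤ log y := by
    have h := log_le_log hx5 hy₁'
    rw [log_mul hx0.ne' (pow_pos hL0 5).ne', log_pow] at h
    push_cast at h
    linarith
  have hv₂ : log y ≤ log x + 7 * log (log x) := by
    have h := log_le_log (hx5.trans_le hy₁') hy₂'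
    rw [log_mul (by positivity) (pow_pos hL0 6).ne', log_mul (by norm_num) hx0.ne', log_pow] at h
    push_cast at h
    linarith [log_two_lt_d9, log_le_sub_one_of_pos (show (0 : ℝ) < 3 / 2 by norm_num)]
  exact div_log_add_le hx hv₁ hv₂

lemma halfLogRatio_le {x : ℕ} (hx : 700 ≤ log x) :
    halfLogRatio x ≤ log (Nat.sqrt x) / log (log (Nat.sqrt x)) := by
  have hx0 : 0 < x := Nat.pos_of_ne_zero (by rintro rfl; norm_num at hx)
  have hs : (0 : ℝ) < Nat.sqrt x := by exact_mod_cast Nat.sqrt_pos.mpr hx0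
  have hx4 : (x : ℝ) ≤ 4 * (Nat.sqrt x : ℝ) ^ 2 := by
    have := Nat.lt_succ_sqrt' x
    exact_mod_cast (by nlinarith : x ≤ 4 * Nat.sqrt x ^ 2)
  have hlow : (log x - 2) / 2 ≤ log (Nat.sqrt x) := by
    have h := log_le_log (by exact_mod_cast hx0) hx4
    rw [log_mul (by norm_num) (by positivity), log_pow,
      show (4 : ℝ) = 2 ^ 2 by norm_num, log_pow] at h
    push_cast at h
    linarith [log_two_lt_d9]
  have hup : log (Nat.sqrt x) ≤ log x := log_le_log hs (by exact_mod_cast Nat.sqrt_le_self x)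
  rw [halfLogRatio, ← div_div]
  exact div_le_div₀ (by linarith) hlow (log_pos (by linarith)) (log_le_log (by linarith) hup)

lemma tendsto_halfLogRatio : Tendsto halfLogRatio atTop atTop := by
  have h : Tendsto (fun y : ℝ => (y - 2) / (2 * log y)) atTop atTop := by
    have h0 := tendsto_pow_log_div_mul_add_atTop (1 / 2) (-1) 1 (by norm_num)
    have hpos : ∀ᶠ y : ℝ in atTop, 0 < log y ^ 1 / (1 / 2 * y + -1) := by
      filter_upwards [eventually_gt_atTop 2] with y hy
      exact div_pos (by simpa using log_pos (by linarith)) (by linarith)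
    refine (tendsto_inv_nhdsGT_zero.comp
      (tendsto_nhdsWithin_iff.mpr ⟨h0, hpos⟩)).congr' ?_
    filter_upwards [eventually_gt_atTop 2] with y hy
    simp only [Function.comp_apply, pow_one, inv_div]
    field_simp
    ring
  exact h.comp (tendsto_log_atTop.comp tendsto_natCast_atTop_atTop)

section Invariant

variable {a c : ℕ → ℕ} {C₀ N : ℕ} (hc : ∀ k y, k < c y → a k ≤ y)
  (hlow : ∀ x, N ≤ x → 0.99 * (log x / log (log x)) ≤ c x)
include hc hlow

lemma sq_le_of_halfLogRatio {C t : ℕ} (hC : 700 ≤ log C) (hN : N ^ 2 ≤ C)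
    (ht : t + 2 ≤ 0.99 * halfLogRatio C) : a (t + 1) ^ 2 ≤ C := by
  have hs : N ≤ Nat.sqrt C := Nat.le_sqrt'.mpr hN
  have hcs : ((t + 2 : ℕ) : ℝ) ≤ c (Nat.sqrt C) := by
    push_cast
    nlinarith [hlow _ hs, halfLogRatio_le hC]
  have hle : a (t + 1) ≤ Nat.sqrt C := hc _ _ (by exact_mod_cast hcs)
  exact (Nat.pow_le_pow_left hle 2).trans (Nat.sqrt_le' C)

variable (ha : ∀ t, 0 < a t) (hC₀ : 700 ≤ log C₀) (hN : N ^ 2 ≤ C₀)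
  (hr : 2 ≤ 0.99 * halfLogRatio C₀)
include ha hC₀ hN hr

/-- `halfLogRatio` of the capacity bounds the number of elements below its square root, and it
grows by at least `3 / 2 > 1 / 0.99` per step, so it stays ahead of the index. -/
theorem sq_le_capacity (t : ℕ) : a (t + 1) ^ 2 ≤ capacity a C₀ t := by
  have hC₀0 : (0 : ℝ) < C₀ := by
    exact_mod_cast Nat.pos_of_ne_zero (by rintro rfl; norm_num at hC₀)
  have hlog : ∀ t, 700 ≤ log (capacity a C₀ t) := fun t =>
    hC₀.trans (log_le_log hC₀0 (by exact_mod_cast le_capacity a C₀ t))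
  have h4 : ∀ t, 4 ≤ capacity a C₀ t := fun t => by
    have : (700 : ℝ) ≤ capacity a C₀ t := (hlog t).trans (log_le_self (Nat.cast_nonneg _))
    exact_mod_cast (by linarith : (4 : ℝ) ≤ capacity a C₀ t)
  have hNt : ∀ t, N ^ 2 ≤ capacity a C₀ t := fun t =>
    hN.trans (le_capacity a C₀ t)
  suffices hinv : ∀ t : ℕ, (t : ℝ) + 2 ≤ 0.99 * halfLogRatio (capacity a C₀ t) from
    sq_le_of_halfLogRatio hc hlow (hlog t) (hNt t) (hinv t)
  intro t
  induction t with
  | zero => simpa [capacity] using hr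
  | succ t ih =>
    have hsq := sq_le_of_halfLogRatio hc hlow (hlog t) (hNt t) ih
    have hstep := halfLogRatio_add_le (hlog t)
      (capacity_mul_log_pow_le (ha _) hsq (h4 t)) (capacity_succ_le (h4 t))
    push_cast
    linarith

end Invariant

section DigitSet

variable {a : ℕ → ℕ} {C₀ : ℕ}

variable (ha : ∀ t, 0 < a t) (hsq : ∀ t, a (t + 1) ^ 2 ≤ capacity a C₀ t)
include ha hsq

lemma capacity_lt_of_weight_le {t y : ℕ} (hy : weight a C₀ t ≤ y) :
    capacity a C₀ t < 2 ^ (2 * Nat.log 2 y + 2) := by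
  have hC : capacity a C₀ t < (y + 1) ^ 2 :=
    Nat.sqrt_lt'.mp (((sqrt_capacity_le_weight (ha _) (hsq t)).trans hy).trans_lt y.lt_succ_self)
  have hy : y + 1 ≤ 2 ^ (Nat.log 2 y + 1) := Nat.lt_pow_succ_log_self (by norm_num) y
  calc capacity a C₀ t < (y + 1) ^ 2 := hC
    _ ≤ (2 ^ (Nat.log 2 y + 1)) ^ 2 := Nat.pow_le_pow_left hy 2
    _ = 2 ^ (2 * Nat.log 2 y + 2) := by rw [← pow_mul]; ring_nf

variable (h4 : 4 ≤ C₀)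
include h4

lemma two_pow_le_capacity (t : ℕ) : 2 ^ t ≤ capacity a C₀ t := by
  induction t with
  | zero => exact le_trans (by norm_num) h4
  | succ t ih =>
    rw [pow_succ']
    exact (Nat.mul_le_mul_left 2 ih).trans
      (two_mul_capacity_le (ha _) (hsq t) (h4.trans (le_capacity a C₀ t)))

lemma ncard_digitSet_inter_le (y : ℕ) :
    (digitSet C₀ (weight a C₀) (digitBound a C₀) ∩ Set.Icc 1 y).ncard
      ≤ C₀ + (2 * Nat.log 2 y + 2) ^ 7 := by
  classical
  set T := 2 * Nat.log 2 y + 2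
  set F := Finset.Icc 1 C₀ ∪
    (Finset.range T).biUnion fun t => (Finset.Icc 1 (T ^ 6)).image (· * weight a C₀ t)
  have hsub : digitSet C₀ (weight a C₀) (digitBound a C₀) ∩ Set.Icc 1 y ⊆ F := by
    rintro m ⟨hm | hm, -, hmy⟩
    · simpa [F] using Or.inl hm
    obtain ⟨t, d, ⟨hd1, hdB⟩, rfl⟩ := Set.mem_iUnion.mp hm
    have hC := capacity_lt_of_weight_le ha hsq ((Nat.le_mul_of_pos_left _ hd1).trans hmy)
    have ht : t < T := (Nat.pow_lt_pow_iff_right (by norm_num)).mp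
      ((two_pow_le_capacity ha hsq h4 t).trans_lt hC)
    have hlog : Nat.log 2 (capacity a C₀ t) < T :=
      Nat.log_lt_of_lt_pow (by have := h4.trans (le_capacity a C₀ t); omega) hC
    have hd : d ≤ T ^ 6 := hdB.trans (Nat.pow_le_pow_left hlog.le 6)
    simp only [F, Finset.coe_union, Finset.coe_biUnion, Finset.coe_image]
    exact Or.inr
      (Set.mem_iUnion₂.mpr ⟨t, by simpa using ht, d, by simpa using ⟨hd1, hd⟩, rfl⟩)
  calc _ ≤ F.card := by
        rw [← Set.ncard_coe_finset]; exact Set.ncard_le_ncard hsub (Finset.finite_toSet _)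
    _ ≤ C₀ + T * T ^ 6 := by
        refine (Finset.card_union_le _ _).trans (Nat.add_le_add (by simp) ?_)
        refine Finset.card_biUnion_le.trans ?_
        calc _ ≤ ∑ _t ∈ Finset.range T, T ^ 6 :=
              Finset.sum_le_sum fun t _ => Finset.card_image_le.trans (by simp)
          _ = T * T ^ 6 := by simp
    _ = C₀ + T ^ 7 := by ring

lemma digitSet_infinite : (digitSet C₀ (weight a C₀) (digitBound a C₀)).Infinite := by
  refine Set.infinite_of_not_bddAbove fun ⟨b, hb⟩ => ?_
  have hB : 1 ≤ digitBound a C₀ (2 * b) :=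
    Nat.one_le_pow _ _ (by have := two_le_log_two (h4.trans (le_capacity a C₀ (2 * b))); omega)
  have hmem : weight a C₀ (2 * b) ∈ digitSet C₀ (weight a C₀) (digitBound a C₀) :=
    Or.inr (Set.mem_iUnion.mpr ⟨2 * b, 1, ⟨le_rfl, hB⟩, one_mul _⟩)
  have hW : 2 ^ b ≤ weight a C₀ (2 * b) := by
    refine le_trans ?_ (sqrt_capacity_le_weight (ha _) (hsq _))
    rw [Nat.le_sqrt, ← pow_add, ← two_mul]
    exact two_pow_le_capacity ha hsq h4 _
  exact absurd ((Nat.lt_two_pow_self).trans_le (hW.trans (hb hmem))) (lt_irrefl b)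

lemma digitSet_pos : ∀ m ∈ digitSet C₀ (weight a C₀) (digitBound a C₀), 0 < m := by
  rintro m (hm | hm)
  · exact hm.1
  obtain ⟨t, d, ⟨hd1, -⟩, rfl⟩ := Set.mem_iUnion.mp hm
  refine Nat.mul_pos hd1 (lt_of_lt_of_le ?_ (sqrt_capacity_le_weight (ha _) (hsq t)))
  exact Nat.sqrt_pos.mpr (by have := h4.trans (le_capacity a C₀ t); omega)

end DigitSet

lemma eventually_bounds_of_tendsto {ι : Type*} {l : Filter ι} {f g h : ι → ℝ}
    (hf : Tendsto (fun n => f n * g n / h n) l (nhds 1)) (hg : ∀ᶠ n in l, 0 < g n)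
    (hh : ∀ᶠ n in l, 0 < h n) {c c' : ℝ} (hc : c < 1) (hc' : 1 < c') :
    ∀ᶠ n in l, c * (h n / g n) ≤ f n ∧ f n ≤ c' * (h n / g n) := by
  filter_upwards [hf.eventually (Ioo_mem_nhds hc hc'), hg, hh] with n ⟨hlo, hhi⟩ hgn hhn
  rw [lt_div_iff₀ hhn] at hlo
  rw [div_lt_iff₀ hhn] at hhi
  rw [← mul_div_assoc, ← mul_div_assoc, div_le_iff₀ hgn, le_div_iff₀ hgn]
  constructor <;> linarith

lemma eventually_ncard_bounds {A : Set ℕ} (hdens : Tendsto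
      (fun n : ℕ => ((A ∩ Set.Icc 1 n).ncard : ℝ) * log (log n) / log n) atTop (nhds 1)) :
    ∀ᶠ n : ℕ in atTop, 0.99 * (log n / log (log n)) ≤ (A ∩ Set.Icc 1 n).ncard ∧
      ((A ∩ Set.Icc 1 n).ncard : ℝ) ≤ 1.01 * (log n / log (log n)) := by
  have hlog : Tendsto (fun n : ℕ => log n) atTop atTop :=
    tendsto_log_atTop.comp tendsto_natCast_atTop_atTop
  exact eventually_bounds_of_tendsto hdens
    ((tendsto_log_atTop.comp hlog).eventually_gt_atTop 0) (hlog.eventually_gt_atTop 0)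
    (by norm_num) (by norm_num)

lemma pow_le_rpow_eight {n X k : ℕ} {K : ℝ} (hK : 1 ≤ K) (hn : 3 ≤ log n)
    (hnK : 2 * log K + 2 ≤ log (log n)) (hX1 : 1 ≤ X) (hX : (X : ℝ) ≤ K * log n ^ 7)
    (hk : (k : ℝ) ≤ 1.01 * (log n / log (log n))) :
    (X : ℝ) ^ k ≤ (n : ℝ) ^ (8 : ℝ) := by
  have hX0 : (0 : ℝ) < X := by exact_mod_cast hX1
  have hn0 : (0 : ℝ) < n := by
    exact_mod_cast Nat.pos_of_ne_zero (by rintro rfl; norm_num at hn)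
  have hLL : 0 < log (log n) := by linarith [log_nonneg hK]
  have hlogX : log X ≤ log K + 7 * log (log n) := by
    have h := log_le_log hX0 hX
    rwa [log_mul (by positivity) (by positivity), log_pow, Nat.cast_ofNat] at h
  have hkey : k * log X ≤ 8 * log n := by
    set q := log n / log (log n)
    have hq : q * log (log n) = log n := div_mul_cancel₀ _ hLL.ne'
    have hq0 : 0 ≤ q := by positivity
    have h₁ : k * log X ≤ 1.01 * q * (log K + 7 * log (log n)) :=
      mul_le_mul hk hlogX (log_nonneg (by exact_mod_cast hX1)) (by positivity)
    nlinarith [mul_le_mul_of_nonneg_left hnK hq0, log_nonneg hK]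
  rw [← log_le_log_iff (by positivity) (by positivity), log_pow, log_rpow hn0]
  linarith

lemma eventually_pCount_le {A M : Set ℕ} {C₀ : ℕ} (hA : ∀ a ∈ A, 0 < a)
    (hM : ∀ m ∈ M, 0 < m)
    (hMcard : ∀ y, (M ∩ Set.Icc 1 y).ncard ≤ C₀ + (2 * Nat.log 2 y + 2) ^ 7)
    (hAcard : ∀ᶠ n : ℕ in atTop,
      ((A ∩ Set.Icc 1 n).ncard : ℝ) ≤ 1.01 * (log n / log (log n))) :
    ∀ᶠ n : ℕ in atTop, (pCount A M n : ℝ) ≤ (n : ℝ) ^ (8 : ℝ) := by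
  set K : ℝ := C₀ + 1 + 4 ^ 7
  have hK : 1 ≤ K := by simp only [K]; linarith [(Nat.cast_nonneg C₀ : (0 : ℝ) ≤ C₀)]
  have hlog : Tendsto (fun n : ℕ => log n) atTop atTop :=
    tendsto_log_atTop.comp tendsto_natCast_atTop_atTop
  filter_upwards [hAcard, hlog.eventually_ge_atTop 3,
    (tendsto_log_atTop.comp hlog).eventually_ge_atTop (2 * log K + 2)] with n hk hn hnK
  have hX : ((1 + (M ∩ Set.Icc 1 n).ncard : ℕ) : ℝ) ≤ K * log n ^ 7 := by
    have hM' : ((1 + (M ∩ Set.Icc 1 n).ncard : ℕ) : ℝ)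
        ≤ 1 + (C₀ + (2 * Nat.log 2 n + 2 : ℝ) ^ 7) := by
      exact_mod_cast Nat.add_le_add_left (hMcard n) 1
    have hL : (2 * Nat.log 2 n + 2 : ℝ) ^ 7 ≤ 4 ^ 7 * log n ^ 7 := by
      rw [← mul_pow]
      exact pow_le_pow_left₀ (by positivity) (by linarith [natLog_two_le n]) 7
    have h1 : 1 ≤ log n ^ 7 := one_le_pow₀ (by linarith)
    nlinarith [(Nat.cast_nonneg C₀ : (0 : ℝ) ≤ C₀)]
  calc (pCount A M n : ℝ)
      ≤ ((1 + (M ∩ Set.Icc 1 n).ncard) ^ (A ∩ Set.Icc 1 n).ncard : ℕ) := by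
        exact_mod_cast ncard_representations_le hA hM
    _ ≤ (n : ℝ) ^ (8 : ℝ) := by
        push_cast
        exact_mod_cast pow_le_rpow_eight hK hn hnK (Nat.le_add_right 1 _) hX hk

lemma pCount_digitSet_pos {A : Set ℕ} (hA : A.Infinite) (hApos : ∀ a ∈ A, 0 < a)
    (h1 : 1 ∈ A) {C₀ : ℕ} (h4 : 4 ≤ C₀)
    (hsq : ∀ t, Nat.nth (· ∈ A) (t + 1) ^ 2 ≤ capacity (Nat.nth (· ∈ A)) C₀ t) (n : ℕ) :
    0 < pCount A (digitSet C₀ (weight (Nat.nth (· ∈ A)) C₀)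
      (digitBound (Nat.nth (· ∈ A)) C₀)) n := by
  have ha : ∀ t, 0 < Nat.nth (· ∈ A) t := fun t => hApos _ (Nat.nth_mem_of_infinite hA t)
  have hn : n ≤ capacity (Nat.nth (· ∈ A)) C₀ n :=
    Nat.lt_two_pow_self.le.trans (two_pow_le_capacity ha hsq h4 n)
  obtain ⟨f, hf⟩ := representations_nonempty_of_le (nth_zero_eq_one hApos h1)
    (Nat.nth_injective hA) (capacity_succ _ C₀) (weight_mul_le _ C₀) n n hn
  have hsub : Nat.nth (· ∈ A) '' Set.Iic n ⊆ A := by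
    rintro _ ⟨t, -, rfl⟩
    exact Nat.nth_mem_of_infinite hA t
  rw [pCount_eq_ncard_representations]
  exact (Set.ncard_pos (finite_representations hApos (digitSet_pos ha hsq h4))).mpr
    ⟨f, representations_mono hsub le_rfl n hf⟩

end RestrictedPartition

open RestrictedPartition in
theorem stmt6 (A : Set ℕ) (hA : A.Infinite) (hApos : ∀ a ∈ A, 0 < a) (h1 : 1 ∈ A)
    (hdens : Tendsto
      (fun n : ℕ => ((A ∩ Set.Icc 1 n).ncard : ℝ) * Real.log (Real.log n) / Real.log n)
      atTop (nhds 1)) :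
    ∀ ε : ℝ, 0 < ε →
      ∃ (n₀ : ℕ) (M : Set ℕ), M.Infinite ∧ (∀ m ∈ M, 0 < m) ∧
      ∀ n : ℕ, n > n₀ → 0 < pCount A M n ∧ (pCount A M n : ℝ) ≤ (n : ℝ) ^ ((8 : ℝ) + ε) := by
  intro ε hε
  set a := Nat.nth (· ∈ A)
  have ha : ∀ t, 0 < a t := fun t => hApos _ (Nat.nth_mem_of_infinite hA t)
  have hcount := eventually_ncard_bounds hdens
  obtain ⟨N, hN⟩ := eventually_atTop.mp hcount
  obtain ⟨C₀, hr, hC₀, hN₂, h4⟩ := ((tendsto_halfLogRatio.eventually_ge_atTop 3).and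
    (((Real.tendsto_log_atTop.comp tendsto_natCast_atTop_atTop).eventually_ge_atTop 700).and
      ((eventually_ge_atTop (N ^ 2)).and (eventually_ge_atTop 4)))).exists
  have hsq := sq_le_capacity (fun _ _ hk => nth_le_of_lt_ncard hk) (fun x hx => (hN x hx).1)
    ha hC₀ hN₂ (by linarith)
  set M := digitSet C₀ (weight a C₀) (digitBound a C₀)
  obtain ⟨n₀, hn₀⟩ := eventually_atTop.mp (eventually_pCount_le hApos
    (digitSet_pos ha hsq h4) (ncard_digitSet_inter_le ha hsq h4) (hcount.mono fun _ h => h.2))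
  refine ⟨n₀, M, digitSet_infinite ha hsq h4, digitSet_pos ha hsq h4, fun n hn =>
    ⟨pCount_digitSet_pos hA hApos h1 h4 hsq n, (hn₀ n hn.le).trans ?_⟩⟩
  exact Real.rpow_le_rpow_of_exponent_le (by exact_mod_cast (n₀.zero_le.trans_lt hn))
    (by linarith)
end

section
/- Let A = {k^k : k ≥ 1}. Then there exist a constant c, an integer n₀, and an infinite set M of positive integers such that 0 < p(n,A,M) ≤ n^c for all n > n₀. -/
open Filter

/-!
Take the multipliers `j * k ^ k` with `k ≥ 1` and `0 < j < 9 * (k + 1) ^ 2`. Every `n ≥ 1` is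
written greedily in the "base" of the squares `(k ^ k) ^ 2`: if
`(k ^ k) ^ 2 ≤ n < ((k + 1) ^ (k + 1)) ^ 2`, give the part `k ^ k` the multiplier
`(n / (k ^ k) ^ 2) * k ^ k` and recurse on `n % (k ^ k) ^ 2`; the digit `n / (k ^ k) ^ 2` is
below `9 * (k + 1) ^ 2` because `(1 + 1 / k) ^ k < e < 3`.
Conversely, if `K ^ K ≤ n < (K + 1) ^ (K + 1)`, a representation of `n` only uses the `K` parts
`k ^ k ≤ n` and the `O(K ^ 3)` multipliers below `n`, so there are at most
`(9 * (K + 1) ^ 3) ^ K ≤ (K ^ K) ^ 9 ≤ n ^ 9` of them.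
-/

def reps (A M : Set ℕ) (n : ℕ) : Set (ℕ →₀ ℕ) :=
  {f | ↑f.support ⊆ A ∧ (∀ a ∈ f.support, f a ∈ M) ∧ f.sum (fun a m => m * a) = n}

theorem pCount_eq_ncard_reps (A M : Set ℕ) (n : ℕ) : pCount A M n = (reps A M n).ncard := rfl

section Reps

variable {A M : Set ℕ} {n : ℕ} {f : ℕ →₀ ℕ}

theorem mul_le_of_mem_reps (hf : f ∈ reps A M n) {a : ℕ} (ha : a ∈ f.support) :
    f a * a ≤ n :=
  hf.2.2 ▸ Finset.single_le_sum (f := fun x => f x * x) (fun _ _ => Nat.zero_le _) ha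

theorem add_single_mem_reps {r a m : ℕ} (hf : f ∈ reps A M r) (hfa : f a = 0) (ha : a ∈ A)
    (hm : m ∈ M) : f + Finsupp.single a m ∈ reps A M (r + m * a) := by
  classical
  obtain ⟨hfA, hfM, hfr⟩ := hf
  refine ⟨?_, fun x hx => ?_, ?_⟩
  · refine (Finset.coe_subset.2 Finsupp.support_add).trans ?_
    rw [Finset.coe_union, Set.union_subset_iff]
    refine ⟨hfA, (Finset.coe_subset.2 Finsupp.support_single_subset).trans ?_⟩
    simpa using ha
  · rcases eq_or_ne x a with rfl | hxa
    · simpa [hfa] using hm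
    · have hx' : (f + Finsupp.single a m) x = f x := by simp [Finsupp.single_eq_of_ne hxa]
      rw [Finsupp.mem_support_iff, hx'] at hx
      rw [hx']
      exact hfM x (Finsupp.mem_support_iff.2 hx)
  · rw [Finsupp.sum_add_index' (fun _ => zero_mul _) (fun _ _ _ => add_mul _ _ _), hfr,
      Finsupp.sum_single_index (zero_mul _)]

variable {S V : Finset ℕ}

theorem reps_subset_finsupp (hV : 0 ∈ V)
    (hAM : ∀ a ∈ A, ∀ m ∈ M, 0 < m → m * a ≤ n → a ∈ S ∧ m ∈ V) :
    reps A M n ⊆ S.finsupp fun _ => V := by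
  intro f hf
  have hsupp : ∀ a ∈ f.support, a ∈ S ∧ f a ∈ V := fun a ha =>
    hAM a (hf.1 ha) (f a) (hf.2.1 a ha) (Nat.pos_of_ne_zero (Finsupp.mem_support_iff.1 ha))
      (mul_le_of_mem_reps hf ha)
  refine Finset.mem_finsupp_iff.2 ⟨fun a ha => (hsupp a ha).1, fun a _ => ?_⟩
  by_cases ha : a ∈ f.support
  · exact (hsupp a ha).2
  · rwa [Finsupp.notMem_support_iff.1 ha]

end Reps

def selfPows : Set ℕ := {x | ∃ k : ℕ, 1 ≤ k ∧ x = k ^ k}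

def selfPowMultipliers : Set ℕ :=
  {m | ∃ k j : ℕ, 1 ≤ k ∧ 0 < j ∧ j < 9 * (k + 1) ^ 2 ∧ m = j * k ^ k}

theorem pow_self_mono : Monotone fun k : ℕ => k ^ k :=
  monotone_nat_of_le_succ fun k =>
    (Nat.pow_le_pow_left k.le_succ k).trans (Nat.pow_le_pow_right k.succ_pos k.le_succ)

theorem succ_pow_le_three_mul_pow (k : ℕ) : (k + 1) ^ k ≤ 3 * k ^ k := by
  rcases Nat.eq_zero_or_pos k with rfl | hk
  · norm_num
  have hk' : (k : ℝ) ≠ 0 := by exact_mod_cast hk.ne'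
  have h : ((k : ℝ) + 1) ^ k ≤ 3 * (k : ℝ) ^ k :=
    calc ((k : ℝ) + 1) ^ k = (1 + (k : ℝ)⁻¹) ^ k * (k : ℝ) ^ k := by
          rw [← mul_pow, add_mul, one_mul, inv_mul_cancel₀ hk']
      _ ≤ 3 * (k : ℝ) ^ k := by
          gcongr
          exact Real.one_add_inv_pow_le_exp.trans Real.exp_one_lt_three.le
  exact_mod_cast h

theorem succ_pow_succ_le (k : ℕ) : (k + 1) ^ (k + 1) ≤ 3 * (k + 1) * k ^ k := by
  rw [pow_succ', mul_comm 3, mul_assoc]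
  exact Nat.mul_le_mul_left _ (succ_pow_le_three_mul_pow k)

theorem exists_pow_self_le_lt {n : ℕ} (hn : 1 ≤ n) :
    ∃ k, 1 ≤ k ∧ k ^ k ≤ n ∧ n < (k + 1) ^ (k + 1) := by
  classical
  have hex : ∃ k, n < (k + 1) ^ (k + 1) :=
    ⟨n, n.lt_succ_self.trans_le (Nat.le_self_pow n.succ_ne_zero _)⟩
  obtain ⟨k, hk⟩ : ∃ k, Nat.find hex = k + 1 := by
    refine Nat.exists_eq_add_one.2 (Nat.pos_of_ne_zero fun h => ?_)
    have := Nat.find_spec hex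
    rw [h] at this
    omega
  refine ⟨k + 1, k.succ_pos, not_lt.1 (Nat.find_min hex (by omega)), hk ▸ Nat.find_spec hex⟩

theorem selfPowMultipliers_infinite : selfPowMultipliers.Infinite :=
  Set.infinite_of_not_bddAbove <| not_bddAbove_iff.2 fun b =>
    ⟨(b + 1) ^ (b + 1), ⟨b + 1, 1, b.succ_pos, one_pos,
      (by norm_num : 1 < 9).trans_le (Nat.le_mul_of_pos_right 9 (by positivity)),
      (one_mul _).symm⟩,
      b.lt_succ_self.trans_le (Nat.le_self_pow b.succ_ne_zero _)⟩

theorem pos_of_mem_selfPowMultipliers {m : ℕ} (hm : m ∈ selfPowMultipliers) : 0 < m := by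
  obtain ⟨k, j, hk, hj, -, rfl⟩ := hm
  exact Nat.mul_pos hj (pow_pos hk k)

-- The bound `a * a ≤ n` on the parts keeps the new part out of the support of the remainder's
-- representation.
theorem exists_mem_reps_selfPows (n : ℕ) :
    ∃ f ∈ reps selfPows selfPowMultipliers n, ∀ a ∈ f.support, a * a ≤ n := by
  induction n using Nat.strong_induction_on with
  | _ n ih =>
  rcases Nat.eq_zero_or_pos n with rfl | hn
  · exact ⟨0, ⟨by simp, by simp, by simp⟩, by simp⟩
  obtain ⟨k, hk, hkn, hnk⟩ := exists_pow_self_le_lt (Nat.sqrt_pos.2 hn)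
  set a := k ^ k
  have haa : a * a ≤ n := Nat.le_sqrt.1 hkn
  have hapos : 0 < a * a := Nat.mul_pos (pow_pos hk k) (pow_pos hk k)
  obtain ⟨f, hf, hfsq⟩ := ih (n % (a * a)) ((Nat.mod_lt _ hapos).trans_le haa)
  have hfa : f a = 0 := by
    by_contra h
    have := hfsq a (Finsupp.mem_support_iff.2 h)
    have := Nat.mod_lt n hapos
    omega
  have hdigit : n / (a * a) < 9 * (k + 1) ^ 2 := by
    refine (Nat.div_lt_iff_lt_mul hapos).2 ((Nat.sqrt_lt.1 hnk).trans_le ?_)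
    calc (k + 1) ^ (k + 1) * (k + 1) ^ (k + 1) ≤ (3 * (k + 1) * a) * (3 * (k + 1) * a) :=
          Nat.mul_le_mul (succ_pow_succ_le k) (succ_pow_succ_le k)
      _ = 9 * (k + 1) ^ 2 * (a * a) := by ring
  have hmul : n / (a * a) * a ∈ selfPowMultipliers :=
    ⟨k, n / (a * a), hk, Nat.div_pos haa hapos, hdigit, rfl⟩
  refine ⟨f + Finsupp.single a (n / (a * a) * a), ?_, fun x hx => ?_⟩
  · have := add_single_mem_reps hf hfa ⟨k, hk, rfl⟩ hmul
    rwa [mul_assoc, mul_comm (n / (a * a)), Nat.mod_add_div] at this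
  · rcases Finset.mem_union.1 (Finsupp.support_add hx) with hx | hx
    · exact (hfsq x hx).trans (Nat.mod_le _ _)
    · rw [Finset.mem_singleton.1 (Finsupp.support_single_subset hx)]
      exact haa

theorem reps_selfPows_subset_finsupp {n K : ℕ} (hK : ∀ k, k ^ k ≤ n → k ≤ K) :
    reps selfPows selfPowMultipliers n ⊆
      ((Finset.Icc 1 K).image fun k => k ^ k).finsupp fun _ =>
        (Finset.range (K + 1) ×ˢ Finset.range (9 * (K + 1) ^ 2)).image
          fun p => p.2 * p.1 ^ p.1 := by
  refine reps_subset_finsupp (Finset.mem_image.2 ⟨(0, 0), by simp, by simp⟩) ?_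
  rintro _ ⟨k, hk, rfl⟩ _ ⟨c, j, hc, hj, hjc, rfl⟩ - hle
  have hcK : c ≤ K := hK c <|
    ((Nat.le_mul_of_pos_left _ hj).trans (Nat.le_mul_of_pos_right _ (pow_pos hk k))).trans hle
  have hkK : k ≤ K :=
    hK k ((Nat.le_mul_of_pos_left _ (Nat.mul_pos hj (pow_pos hc c))).trans hle)
  refine ⟨Finset.mem_image.2 ⟨k, Finset.mem_Icc.2 ⟨hk, hkK⟩, rfl⟩,
    Finset.mem_image.2 ⟨(c, j), ?_, rfl⟩⟩
  simp only [Finset.mem_product, Finset.mem_range]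
  exact ⟨Nat.lt_succ_of_le hcK,
    hjc.trans_le (Nat.mul_le_mul_left _ (Nat.pow_le_pow_left (Nat.succ_le_succ hcK) 2))⟩

theorem finite_reps_selfPows (n : ℕ) : (reps selfPows selfPowMultipliers n).Finite := by
  refine (Finset.finite_toSet _).subset (reps_selfPows_subset_finsupp (K := n) fun k hk => ?_)
  rcases Nat.eq_zero_or_pos k with rfl | hk0
  · exact Nat.zero_le _
  · exact (Nat.le_self_pow hk0.ne' k).trans hk

theorem ncard_reps_selfPows_le {n K : ℕ} (hK : ∀ k, k ^ k ≤ n → k ≤ K) :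
    (reps selfPows selfPowMultipliers n).ncard ≤ (9 * (K + 1) ^ 3) ^ K := by
  refine (Set.ncard_le_ncard (reps_selfPows_subset_finsupp hK) (Finset.finite_toSet _)).trans ?_
  rw [Set.ncard_coe_finset, Finset.card_finsupp, Finset.prod_const]
  refine (Nat.pow_le_pow_right
    (Finset.card_pos.2 ⟨0, Finset.mem_image.2 ⟨(0, 0), by simp, by simp⟩⟩)
    (Finset.card_image_le.trans (Nat.card_Icc 1 K).le)).trans (Nat.pow_le_pow_left ?_ K)
  refine Finset.card_image_le.trans ?_
  rw [Finset.card_product, Finset.card_range, Finset.card_range]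
  exact le_of_eq (by ring)

theorem nine_mul_succ_pow_three_le {K : ℕ} (hK : 2 ≤ K) : 9 * (K + 1) ^ 3 ≤ K ^ 9 := by
  have h64 : 2 ^ 6 ≤ K ^ 6 := Nat.pow_le_pow_left hK 6
  have h3 : (2 * (K + 1)) ^ 3 ≤ (3 * K) ^ 3 := Nat.pow_le_pow_left (by omega) 3
  rw [mul_pow, mul_pow] at h3
  calc 9 * (K + 1) ^ 3 ≤ 2 ^ 6 * K ^ 3 := by linarith [Nat.zero_le (K ^ 3)]
    _ ≤ K ^ 6 * K ^ 3 := Nat.mul_le_mul_right _ h64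
    _ = K ^ 9 := by ring

theorem stmt8 (A : Set ℕ) (hA : A = {x | ∃ k : ℕ, 1 ≤ k ∧ x = k ^ k}) :
    ∃ (c : ℝ) (n₀ : ℕ) (M : Set ℕ), M.Infinite ∧ (∀ m ∈ M, 0 < m) ∧
      ∀ n : ℕ, n > n₀ → 0 < pCount A M n ∧ (pCount A M n : ℝ) ≤ (n : ℝ) ^ c := by
  subst hA
  refine ⟨9, 3, selfPowMultipliers, selfPowMultipliers_infinite,
    fun _ => pos_of_mem_selfPowMultipliers, fun n hn => ?_⟩
  obtain ⟨K, -, hKn, hnK⟩ := exists_pow_self_le_lt (n := n) (by omega)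
  have hK : ∀ k, k ^ k ≤ n → k ≤ K := fun k hk =>
    Nat.lt_succ_iff.1 (pow_self_mono.reflect_lt (hk.trans_lt hnK))
  have hK2 : 2 ≤ K := by
    by_contra h
    interval_cases K <;> omega
  obtain ⟨f, hf, -⟩ := exists_mem_reps_selfPows n
  rw [pCount_eq_ncard_reps]
  refine ⟨(Set.ncard_pos (finite_reps_selfPows n)).2 ⟨f, hf⟩, ?_⟩
  rw [show (9 : ℝ) = (9 : ℕ) by norm_num, Real.rpow_natCast]
  exact_mod_cast calc (reps _ _ n).ncard ≤ (9 * (K + 1) ^ 3) ^ K := ncard_reps_selfPows_le hK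
    _ ≤ (K ^ 9) ^ K := Nat.pow_le_pow_left (nine_mul_succ_pow_three_le hK2) K
    _ = (K ^ K) ^ 9 := by rw [← pow_mul, ← pow_mul, mul_comm]
    _ ≤ n ^ 9 := Nat.pow_le_pow_left hKn 9
end

section
/- Let A and M be infinite sets of positive integers and suppose that: (i) for some ε > 0 and all sufficiently large n, |A ∩ {1,...,n}| ≤ (1+ε) · (log n)/(log log n) with ε ≤ 1/16, and (ii) |M ∩ {1,...,n}| ≤ (log₂ n)^8 − 1 for all sufficiently large n. Then for every δ > 0 there is an m₀ such that ∑_{n=1}^{m} p(n,A,M) ≤ m^{8(1+ε)+δ} for all m > m₀. -/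
/-!
A representation of some `n ≤ m` only uses parts `a ∈ A ∩ [1, m]` with multiplicities in
`M ∩ [1, m]`, so `∑_{n ≤ m} p(n, A, M) ≤ (|M ∩ [1, m]| + 1) ^ |A ∩ [1, m]|`. Under the density
hypotheses this is at most `((log₂ m) ^ 8) ^ ((1 + ε) log m / log log m)`, whose logarithm is
`8 (1 + ε) log m · (1 - log log 2 / log log m) ≤ (8 (1 + ε) + δ) log m` for large `m`.
-/

open Filter

section Representations

variable {A M : Set ℕ}

lemma mul_le_sum_of_mem_support (f : ℕ →₀ ℕ) {a : ℕ} (ha : a ∈ f.support) :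
    f a * a ≤ f.sum fun a m => m * a :=
  Finset.single_le_sum (f := fun a => f a * a) (fun _ _ => Nat.zero_le _) ha

lemma mem_finsupp_of_sum_le (hApos : ∀ a ∈ A, 0 < a) {m : ℕ} {T V : Finset ℕ}
    (hT : A ∩ Set.Icc 1 m ⊆ T) (hV : M ∩ Set.Icc 1 m ⊆ V) {f : ℕ →₀ ℕ}
    (hsupp : ↑f.support ⊆ A) (hval : ∀ a ∈ f.support, f a ∈ M)
    (hsum : (f.sum fun a m => m * a) ≤ m) :
    f ∈ T.finsupp fun _ => insert 0 V := by
  have hbound : ∀ a ∈ f.support, 1 ≤ a ∧ 1 ≤ f a ∧ a ≤ m ∧ f a ≤ m := by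
    intro a ha
    have hfa : 0 < f a := Nat.pos_of_ne_zero (Finsupp.mem_support_iff.mp ha)
    have ha0 : 0 < a := hApos a (hsupp ha)
    have hprod := (mul_le_sum_of_mem_support f ha).trans hsum
    exact ⟨ha0, hfa, (Nat.le_mul_of_pos_left a hfa).trans hprod,
      (Nat.le_mul_of_pos_right (f a) ha0).trans hprod⟩
  refine Finset.mem_finsupp_iff.mpr ⟨fun a ha => ?_, fun a _ => ?_⟩
  · obtain ⟨h1, -, hm, -⟩ := hbound a ha
    exact hT ⟨hsupp ha, h1, hm⟩
  · by_cases ha : a ∈ f.support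
    · obtain ⟨-, h1, -, hm⟩ := hbound a ha
      exact Finset.mem_insert_of_mem (hV ⟨hval a ha, h1, hm⟩)
    · simp [Finsupp.notMem_support_iff.mp ha]

lemma pCount_le_card_filter (hApos : ∀ a ∈ A, 0 < a) {m n : ℕ} (hn : n ≤ m) {T V : Finset ℕ}
    (hT : A ∩ Set.Icc 1 m ⊆ T) (hV : M ∩ Set.Icc 1 m ⊆ V) :
    pCount A M n ≤
      ((T.finsupp fun _ => insert 0 V).filter fun f => (f.sum fun a m => m * a) = n).card := by
  refine (Set.ncard_le_ncard ?_ (Finset.finite_toSet _)).trans_eq (Set.ncard_coe_finset _)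
  rintro f ⟨hsupp, hval, rfl⟩
  exact Finset.mem_filter.mpr ⟨mem_finsupp_of_sum_le hApos hT hV hsupp hval hn, rfl⟩

lemma sum_pCount_Icc_le (hApos : ∀ a ∈ A, 0 < a) (m : ℕ) :
    ∑ n ∈ Finset.Icc 1 m, pCount A M n ≤
      ((M ∩ Set.Icc 1 m).ncard + 1) ^ (A ∩ Set.Icc 1 m).ncard := by
  have hTfin : (A ∩ Set.Icc 1 m).Finite := (Set.finite_Icc 1 m).inter_of_right A
  have hVfin : (M ∩ Set.Icc 1 m).Finite := (Set.finite_Icc 1 m).inter_of_right M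
  set T := hTfin.toFinset
  set V := hVfin.toFinset
  set F : Finset (ℕ →₀ ℕ) := T.finsupp fun _ => insert 0 V
  calc ∑ n ∈ Finset.Icc 1 m, pCount A M n
      ≤ ∑ n ∈ Finset.Icc 1 m, (F.filter fun f => (f.sum fun a m => m * a) = n).card :=
        Finset.sum_le_sum fun n hn => pCount_le_card_filter hApos (Finset.mem_Icc.mp hn).2
          hTfin.coe_toFinset.superset hVfin.coe_toFinset.superset
    _ = (F.filter fun f => (f.sum fun a m => m * a) ∈ Finset.Icc 1 m).card :=
        Finset.sum_card_fiberwise_eq_card_filter _ _ _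
    _ ≤ F.card := Finset.card_filter_le _ _
    _ = (insert 0 V).card ^ T.card := by simp [F]
    _ ≤ (V.card + 1) ^ T.card := Nat.pow_le_pow_left (Finset.card_insert_le 0 V) _
    _ = _ := by rw [Set.ncard_eq_toFinset_card _ hTfin, Set.ncard_eq_toFinset_card _ hVfin]

end Representations

lemma logb_pow_rpow_le (d : ℕ) (c δ : ℝ) (hδ : 0 < δ) :
    ∀ᶠ x : ℝ in atTop, (Real.logb 2 x ^ d) ^ (c * Real.log x / Real.log (Real.log x)) ≤
      x ^ (d * c + δ) := by
  set l₂ := Real.log (Real.log 2)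
  have hloglog : Tendsto (fun x => Real.log (Real.log x)) atTop atTop :=
    Real.tendsto_log_atTop.comp Real.tendsto_log_atTop
  filter_upwards [eventually_gt_atTop 1, hloglog.eventually_ge_atTop (max 1 (-(d * c * l₂) / δ))]
    with x hx hLLbig
  set L := Real.log x
  set LL := Real.log L
  have hL : 0 < L := Real.log_pos hx
  have hLL : 0 < LL := one_pos.trans_le ((le_max_left _ _).trans hLLbig)
  have hlog2 : 0 < Real.log 2 := Real.log_pos one_lt_two
  have hthreshold : -(d * c * l₂) ≤ δ * LL :=
    (div_le_iff₀' hδ).mp ((le_max_right _ _).trans hLLbig)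
  have hlogB : Real.log (Real.logb 2 x ^ d) = d * (LL - l₂) := by
    rw [Real.log_pow, Real.logb, Real.log_div hL.ne' hlog2.ne']
  have hB : 0 < Real.logb 2 x ^ d := pow_pos (div_pos hL hlog2) d
  rw [Real.rpow_def_of_pos hB, Real.rpow_def_of_pos (zero_lt_one.trans hx), Real.exp_le_exp,
    hlogB]
  have hcorrection : -(d * c * l₂) * L / LL ≤ δ * L := by
    rw [div_le_iff₀ hLL]
    calc -(d * c * l₂) * L ≤ δ * LL * L := mul_le_mul_of_nonneg_right hthreshold hL.le
      _ = δ * L * LL := by ring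
  calc d * (LL - l₂) * (c * L / LL) = d * c * L + -(d * c * l₂) * L / LL := by
        field_simp
        ring
    _ ≤ L * (d * c + δ) := by linarith

lemma natCast_succ_pow_le_rpow {B K : ℝ} {v k : ℕ} (hv : (v : ℝ) ≤ B - 1) (hk : (k : ℝ) ≤ K) :
    ((v + 1 : ℕ) : ℝ) ^ k ≤ B ^ K := by
  have hB : 1 ≤ B := by linarith [v.cast_nonneg (α := ℝ)]
  calc ((v + 1 : ℕ) : ℝ) ^ k ≤ B ^ k := pow_le_pow_left₀ (by positivity) (by push_cast; linarith) k
    _ = B ^ (k : ℝ) := (Real.rpow_natCast B k).symm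
    _ ≤ B ^ K := Real.rpow_le_rpow_of_exponent_le hB hk

theorem stmt10_general (A M : Set ℕ)
    (hApos : ∀ a ∈ A, 0 < a)
    (ε : ℝ)
    (hAdens : ∀ᶠ n : ℕ in atTop,
      ((A ∩ Set.Icc 1 n).ncard : ℝ) ≤ (1 + ε) * Real.log n / Real.log (Real.log n))
    (hMdens : ∀ᶠ n : ℕ in atTop,
      ((M ∩ Set.Icc 1 n).ncard : ℝ) ≤ Real.logb 2 n ^ 8 - 1) :
    ∀ δ : ℝ, 0 < δ → ∃ m₀ : ℕ, ∀ m : ℕ, m > m₀ →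
      ((∑ n ∈ Finset.Icc 1 m, pCount A M n : ℕ) : ℝ) ≤ (m : ℝ) ^ (8 * (1 + ε) + δ) := by
  intro δ hδ
  have hlog := tendsto_natCast_atTop_atTop.eventually (logb_pow_rpow_le 8 (1 + ε) δ hδ)
  have hev : ∀ᶠ m : ℕ in atTop,
      ((∑ n ∈ Finset.Icc 1 m, pCount A M n : ℕ) : ℝ) ≤ (m : ℝ) ^ (8 * (1 + ε) + δ) := by
    filter_upwards [hAdens, hMdens, hlog] with m hAm hMm hlogm
    calc ((∑ n ∈ Finset.Icc 1 m, pCount A M n : ℕ) : ℝ)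
        ≤ (((M ∩ Set.Icc 1 m).ncard + 1 : ℕ) : ℝ) ^ (A ∩ Set.Icc 1 m).ncard := by
          exact_mod_cast sum_pCount_Icc_le hApos m
      _ ≤ (Real.logb 2 m ^ 8) ^ ((1 + ε) * Real.log m / Real.log (Real.log m)) :=
          natCast_succ_pow_le_rpow hMm hAm
      _ ≤ (m : ℝ) ^ (8 * (1 + ε) + δ) := by exact_mod_cast hlogm
  obtain ⟨m₀, hm₀⟩ := eventually_atTop.mp hev
  exact ⟨m₀, fun m hm => hm₀ m hm.le⟩

theorem stmt10 (A M : Set ℕ) (hA : A.Infinite) (hM : M.Infinite)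
    (hApos : ∀ a ∈ A, 0 < a) (hMpos : ∀ x ∈ M, 0 < x)
    (ε : ℝ) (hε : 0 < ε) (hε16 : ε ≤ 1 / 16)
    (hAdens : ∀ᶠ n : ℕ in atTop,
      ((A ∩ Set.Icc 1 n).ncard : ℝ) ≤ (1 + ε) * Real.log n / Real.log (Real.log n))
    (hMdens : ∀ᶠ n : ℕ in atTop,
      ((M ∩ Set.Icc 1 n).ncard : ℝ) ≤ Real.logb 2 n ^ 8 - 1) :
    ∀ δ : ℝ, 0 < δ → ∃ m₀ : ℕ, ∀ m : ℕ, m > m₀ →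
      ((∑ n ∈ Finset.Icc 1 m, pCount A M n : ℕ) : ℝ) ≤ (m : ℝ) ^ (8 * (1 + ε) + δ) :=
  stmt10_general A M hApos ε hAdens hMdens
end

section
/- Let A be an infinite set of positive integers with 1 ∈ A such that |A ∩ {1,...,n}| = (1+o(1)) · (log n)/(log log n) as n → ∞. Then there exist an integer n₀ and an infinite set M of positive integers such that for all n > n₀ both p(n,A,M) > 0 and |M ∩ {1,...,n}| < (log₂ n)^8 − 1. -/
/-!
Enumerate `A` as `a₀ = 1 < a₁ < ⋯`. Since `log (i!³) ≈ 3 i log i`, the density hypothesis puts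
more than `i + 1` elements of `A` below `i!³` for large `i`, so eventually `a_{i+1} ≤ i!³`.

Let `R₀ = C` and `R_{i+1} = R_i + w_i D_i a_{i+1}` with `w_i = 2 (i+1)⁶` and
`D_i = ⌊(R_i + 1) / a_{i+1}⌋` (`radius`, `weight`, `quantum`), and let `M` consist of `1, …, C`
and the `c D_i` with `1 ≤ c ≤ w_i`. As `D_i a_{i+1} ≤ R_i + 1`, removing from `n ≤ R_{i+1}` the
largest multiple `c D_i a_{i+1}` with `c ≤ w_i` leaves at most `R_i`; so every `n ≤ R_i` is
represented by `a₀, …, a_i`. While `a_{i+1}² ≤ R_i` we have `D_i a_{i+1} ≥ R_i / 2`, so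
`R_i ≥ C (i!)⁶` and `R_i ≥ 2^i`; taking `C > a_{i₀}²` beyond the threshold `i₀` above keeps
`a_{i+1}² ≤ R_i` for all `i`. Then also `R_i < 4 D_i²`, so `c D_i ≤ n` forces
`i < 2 log₂ n + 4`, and `|M ∩ [1, n]| ≤ C + 2 (2 log₂ n + 4)⁷`.
-/

open Filter

open scoped Nat Topology

def Representable (S M : Set ℕ) (n : ℕ) : Prop :=
  ∃ f : ℕ →₀ ℕ, ↑f.support ⊆ S ∧ (∀ x ∈ f.support, f x ∈ M) ∧ f.sum (fun x m => m * x) = n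

namespace Representable

variable {S T M : Set ℕ} {n : ℕ}

lemma zero : Representable S M 0 := ⟨0, by simp, by simp, by simp⟩

lemma mono (hST : S ⊆ T) (h : Representable S M n) : Representable T M n :=
  let ⟨f, hS, hM, hsum⟩ := h
  ⟨f, hS.trans hST, hM, hsum⟩

lemma add_mul {x m : ℕ} (h : Representable S M n) (hx : x ∉ S) (hm : m ∈ insert 0 M) :
    Representable (insert x S) M (n + m * x) := by
  obtain ⟨f, hS, hM, hsum⟩ := h
  have hfx : f x = 0 := Finsupp.notMem_support_iff.mp fun h => hx (hS h)
  refine ⟨f + Finsupp.single x m, ?_, ?_, ?_⟩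
  · refine (Finset.coe_subset.mpr Finsupp.support_add).trans ?_
    rw [Finset.coe_union]
    exact Set.union_subset (hS.trans (Set.subset_insert x S))
      ((Finset.coe_subset.mpr Finsupp.support_single_subset).trans (by simp))
  · intro y hy
    by_cases hyx : y = x
    · subst hyx
      have hm0 : m ≠ 0 := by simpa [hfx] using hy
      simpa [hfx, hm0] using hm
    · have hyf : y ∈ f.support := by simpa [Finsupp.single_apply, Ne.symm hyx] using hy
      simpa [Finsupp.single_apply, Ne.symm hyx] using hM y hyf
  · rw [Finsupp.sum_add_index' (fun _ => zero_mul _) (fun _ _ _ => Nat.add_mul _ _ _), hsum,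
      Finsupp.sum_single_index (zero_mul _)]

end Representable

lemma finite_representations {A : Set ℕ} (hA : ∀ a ∈ A, 0 < a) (M : Set ℕ) (n : ℕ) :
    {f : ℕ →₀ ℕ | ↑f.support ⊆ A ∧ (∀ a ∈ f.support, f a ∈ M) ∧
      f.sum (fun a m => m * a) = n}.Finite := by
  refine (Set.finite_Icc 0 (Finsupp.indicator (Finset.Icc 1 n) fun _ _ => n)).subset ?_
  rintro f ⟨hfA, -, hsum⟩
  refine ⟨zero_le, (Finsupp.le_iff _ _).mpr fun x hx => ?_⟩
  have hxpos : 0 < x := hA x (hfA hx)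
  have hfx : 0 < f x := Nat.pos_of_ne_zero (Finsupp.mem_support_iff.mp hx)
  have hterm : f x * x ≤ n :=
    hsum ▸ Finset.single_le_sum (f := fun y => f y * y) (fun _ _ => Nat.zero_le _) hx
  have hxn : x ≤ n := (Nat.le_mul_of_pos_left x hfx).trans hterm
  rw [Finsupp.indicator_of_mem (Finset.mem_Icc.mpr ⟨hxpos, hxn⟩)]
  exact (Nat.le_mul_of_pos_right (f x) hxpos).trans hterm

lemma pCount_pos {A M : Set ℕ} {n : ℕ} (hA : ∀ a ∈ A, 0 < a) (h : Representable A M n) :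
    0 < pCount A M n :=
  (Set.ncard_pos (finite_representations hA M n)).mpr h

lemma add_two_le_two_mul_div_mul {b R : ℕ} (hb : 0 < b) (hbR : b ^ 2 ≤ R) :
    R + 2 ≤ 2 * ((R + 1) / b * b) := by
  have hlt : R + 1 < (R + 1) / b * b + b := Nat.lt_div_mul_add hb
  nlinarith

lemma exists_mul_le_and_sub_mul_le {q R l n : ℕ} (hq : 0 < q) (hqR : q ≤ R + 1)
    (hn : n ≤ R + l * q) : ∃ c ≤ l, c * q ≤ n ∧ n - c * q ≤ R := by
  refine ⟨min l (n / q), min_le_left _ _,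
    (Nat.mul_le_mul_right q (min_le_right _ _)).trans (Nat.div_mul_le_self n q), ?_⟩
  rcases le_total l (n / q) with h | h
  · rw [min_eq_left h]
    omega
  · rw [min_eq_right h, ← Nat.mod_eq_sub_div_mul]
    have := Nat.mod_lt n hq
    omega

lemma add_two_mul_pow_seven_lt_pow_eight {C l : ℕ} (h : C + 5000 ≤ l) :
    C + 2 * (2 * l + 4) ^ 7 + 1 < l ^ 8 := by
  have h3 : (2 * l + 4) ^ 7 ≤ 2187 * l ^ 7 := by
    calc (2 * l + 4) ^ 7 ≤ (3 * l) ^ 7 := by gcongr; omega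
      _ = 2187 * l ^ 7 := by ring
  have hl7 : 1 ≤ l ^ 7 := Nat.one_le_pow _ _ (by omega)
  calc C + 2 * (2 * l + 4) ^ 7 + 1 ≤ (C + 4375) * l ^ 7 := by nlinarith
    _ < l * l ^ 7 := by gcongr; omega
    _ = l ^ 8 := by ring

namespace GreedyMultipliers

def weight (i : ℕ) : ℕ := 2 * (i + 1) ^ 6

def radius (a : ℕ → ℕ) (C : ℕ) : ℕ → ℕ
  | 0 => C
  | i + 1 => radius a C i + weight i * ((radius a C i + 1) / a (i + 1) * a (i + 1))

def quantum (a : ℕ → ℕ) (C i : ℕ) : ℕ := (radius a C i + 1) / a (i + 1)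

def multipliers (a : ℕ → ℕ) (C : ℕ) : Set ℕ :=
  Set.Icc 1 C ∪ {m | ∃ i, ∃ c ∈ Set.Icc 1 (weight i), m = c * quantum a C i}

variable {a : ℕ → ℕ} {C : ℕ}

lemma radius_succ (i : ℕ) :
    radius a C (i + 1) = radius a C i + weight i * (quantum a C i * a (i + 1)) := rfl

lemma quantum_mul_le (i : ℕ) : quantum a C i * a (i + 1) ≤ radius a C i + 1 :=
  Nat.div_mul_le_self _ _

lemma radius_add_two_le {i : ℕ} (ha : 0 < a (i + 1)) (hsq : a (i + 1) ^ 2 ≤ radius a C i) :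
    radius a C i + 2 ≤ 2 * (quantum a C i * a (i + 1)) :=
  add_two_le_two_mul_div_mul ha hsq

lemma radius_lt_four_mul_quantum_sq {i : ℕ} (ha : 0 < a (i + 1))
    (hsq : a (i + 1) ^ 2 ≤ radius a C i) : radius a C i < 4 * quantum a C i ^ 2 := by
  have h := radius_add_two_le ha hsq
  have hlt : a (i + 1) < 2 * quantum a C i := by nlinarith
  nlinarith

lemma radius_add_mul_le_radius_succ {i : ℕ} (ha : 0 < a (i + 1))
    (hsq : a (i + 1) ^ 2 ≤ radius a C i) :
    radius a C i + (i + 1) ^ 6 * (radius a C i + 2) ≤ radius a C (i + 1) := by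
  have h := Nat.mul_le_mul_left ((i + 1) ^ 6) (radius_add_two_le ha hsq)
  rw [radius_succ, weight]
  linarith

lemma factorial_pow_mul_le_radius (hmono : StrictMono a) {i : ℕ}
    (h : ∀ j < i, a (j + 1) ^ 2 ≤ radius a C j) : C * i ! ^ 6 ≤ radius a C i := by
  induction i with
  | zero => simp [radius]
  | succ i ih =>
    have ha := Nat.zero_lt_of_lt (hmono i.lt_succ_self)
    have hsq := h i i.lt_succ_self
    have ih := ih fun j hj => h j (hj.trans i.lt_succ_self)
    calc C * (i + 1)! ^ 6 = (i + 1) ^ 6 * (C * i ! ^ 6) := by rw [Nat.factorial_succ]; ring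
      _ ≤ (i + 1) ^ 6 * (radius a C i + 2) := by gcongr; omega
      _ ≤ radius a C (i + 1) := le_of_add_le_right (radius_add_mul_le_radius_succ ha hsq)

lemma two_pow_le_radius (hC : 1 ≤ C) (hmono : StrictMono a) {i : ℕ}
    (h : ∀ j < i, a (j + 1) ^ 2 ≤ radius a C j) : 2 ^ i ≤ radius a C i := by
  induction i with
  | zero => simpa [radius] using hC
  | succ i ih =>
    have ha := Nat.zero_lt_of_lt (hmono i.lt_succ_self)
    have hsq := h i i.lt_succ_self
    have ih := ih fun j hj => h j (hj.trans i.lt_succ_self)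
    have := radius_add_mul_le_radius_succ ha hsq
    have : 1 ≤ (i + 1) ^ 6 := Nat.one_le_pow _ _ i.succ_pos
    rw [pow_succ]
    nlinarith

lemma exists_sq_le_radius (hmono : StrictMono a) (h : ∀ᶠ i in atTop, a (i + 1) ≤ i ! ^ 3) :
    ∃ C, 1 ≤ C ∧ ∀ i, a (i + 1) ^ 2 ≤ radius a C i := by
  obtain ⟨i₀, hi₀⟩ := eventually_atTop.mp h
  refine ⟨a i₀ ^ 2 + 1, by omega, fun i => ?_⟩
  induction i using Nat.strong_induction_on with
  | _ i ih =>
    have hgrowth := factorial_pow_mul_le_radius hmono ih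
    have hfac : 1 ≤ i ! ^ 6 := Nat.one_le_pow _ _ i.factorial_pos
    rcases lt_or_ge i i₀ with hi | hi
    · have : a (i + 1) ^ 2 ≤ a i₀ ^ 2 := Nat.pow_le_pow_left (hmono.monotone hi) 2
      nlinarith
    · have : a (i + 1) ^ 2 ≤ i ! ^ 6 := by
        calc a (i + 1) ^ 2 ≤ (i ! ^ 3) ^ 2 := Nat.pow_le_pow_left (hi₀ i hi) 2
          _ = i ! ^ 6 := by ring
      nlinarith

lemma quantum_pos (hmono : StrictMono a) (hsq : ∀ i, a (i + 1) ^ 2 ≤ radius a C i) (i : ℕ) :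
    0 < quantum a C i := by
  have h := radius_lt_four_mul_quantum_sq (Nat.zero_lt_of_lt (hmono i.lt_succ_self)) (hsq i)
  exact Nat.pos_of_ne_zero fun h0 => by simp [h0] at h

lemma representable_of_le_radius (ha0 : a 0 = 1) (hmono : StrictMono a)
    (hsq : ∀ i, a (i + 1) ^ 2 ≤ radius a C i) :
    ∀ i n, n ≤ radius a C i → Representable (a '' Set.Iic i) (multipliers a C) n := by
  intro i
  induction i with
  | zero =>
    intro n hn
    have hm : n ∈ insert 0 (multipliers a C) := by
      rcases Nat.eq_zero_or_pos n with rfl | hn0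
      · exact Set.mem_insert 0 _
      · exact Or.inr (Or.inl ⟨hn0, hn⟩)
    have h := (Representable.zero (S := ∅)).add_mul (Set.notMem_empty (a 0)) hm
    rw [ha0, zero_add, mul_one] at h
    exact h.mono (by simp [ha0])
  | succ i ih =>
    intro n hn
    have hq : 0 < quantum a C i * a (i + 1) :=
      Nat.mul_pos (quantum_pos hmono hsq i) (Nat.zero_lt_of_lt (hmono i.lt_succ_self))
    rw [radius_succ] at hn
    obtain ⟨c, hcw, hcn, hrem⟩ := exists_mul_le_and_sub_mul_le hq (quantum_mul_le i) hn
    have hm : c * quantum a C i ∈ insert 0 (multipliers a C) := by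
      rcases Nat.eq_zero_or_pos c with rfl | hc
      · simp
      · exact Or.inr (Or.inr ⟨i, c, ⟨hc, hcw⟩, rfl⟩)
    have hx : a (i + 1) ∉ a '' Set.Iic i := by simp [hmono.injective.mem_set_image]
    have hsub : insert (a (i + 1)) (a '' Set.Iic i) ⊆ a '' Set.Iic (i + 1) :=
      Set.insert_subset (Set.mem_image_of_mem a (Set.mem_Iic.mpr le_rfl))
        (Set.image_mono (Set.Iic_subset_Iic.mpr i.le_succ))
    have h := ((ih _ hrem).add_mul hx hm).mono hsub
    rwa [mul_assoc, Nat.sub_add_cancel hcn] at h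

lemma representable_range (hC : 1 ≤ C) (ha0 : a 0 = 1) (hmono : StrictMono a)
    (hsq : ∀ i, a (i + 1) ^ 2 ≤ radius a C i) (n : ℕ) :
    Representable (Set.range a) (multipliers a C) n :=
  (representable_of_le_radius ha0 hmono hsq n n
    (n.lt_two_pow_self.le.trans (two_pow_le_radius hC hmono fun j _ => hsq j))).mono
    (Set.image_subset_range a _)

lemma pos_of_mem_multipliers (hmono : StrictMono a) (hsq : ∀ i, a (i + 1) ^ 2 ≤ radius a C i) :
    ∀ m ∈ multipliers a C, 0 < m := by
  rintro m (hm | ⟨i, c, hc, rfl⟩)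
  · exact hm.1
  · exact Nat.mul_pos hc.1 (quantum_pos hmono hsq i)

lemma quantum_mem_multipliers (i : ℕ) : quantum a C i ∈ multipliers a C :=
  Or.inr ⟨i, 1, ⟨le_rfl, Nat.one_le_iff_ne_zero.mpr (by simp [weight])⟩, (one_mul _).symm⟩

lemma two_pow_lt_four_mul_quantum_sq (hC : 1 ≤ C) (hmono : StrictMono a)
    (hsq : ∀ i, a (i + 1) ^ 2 ≤ radius a C i) (i : ℕ) : 2 ^ i < 4 * quantum a C i ^ 2 :=
  (two_pow_le_radius hC hmono fun j _ => hsq j).trans_lt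
    (radius_lt_four_mul_quantum_sq (Nat.zero_lt_of_lt (hmono i.lt_succ_self)) (hsq i))

lemma multipliers_infinite (hC : 1 ≤ C) (hmono : StrictMono a)
    (hsq : ∀ i, a (i + 1) ^ 2 ≤ radius a C i) : (multipliers a C).Infinite := by
  refine Set.infinite_of_not_bddAbove fun ⟨B, hB⟩ => ?_
  have hlt := two_pow_lt_four_mul_quantum_sq hC hmono hsq (4 * B ^ 2)
  have hle : quantum a C (4 * B ^ 2) ≤ B := hB (quantum_mem_multipliers _)
  have : 4 * quantum a C (4 * B ^ 2) ^ 2 ≤ 4 * B ^ 2 := by gcongr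
  have := (4 * B ^ 2).lt_two_pow_self
  omega

lemma lt_of_quantum_le (hC : 1 ≤ C) (hmono : StrictMono a)
    (hsq : ∀ i, a (i + 1) ^ 2 ≤ radius a C i) {i n : ℕ} (h : quantum a C i ≤ n) :
    i < 2 * Nat.log 2 n + 4 := by
  refine (Nat.pow_lt_pow_iff_right one_lt_two).mp ?_
  calc 2 ^ i < 4 * quantum a C i ^ 2 := two_pow_lt_four_mul_quantum_sq hC hmono hsq i
    _ ≤ 4 * n ^ 2 := by gcongr
    _ < 4 * (2 ^ (Nat.log 2 n + 1)) ^ 2 := by gcongr; exact Nat.lt_pow_succ_log_self one_lt_two n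
    _ = 2 ^ (2 * Nat.log 2 n + 4) := by ring

lemma multipliers_inter_Icc_subset (hC : 1 ≤ C) (hmono : StrictMono a)
    (hsq : ∀ i, a (i + 1) ^ 2 ≤ radius a C i) (n : ℕ) :
    multipliers a C ∩ Set.Icc 1 n ⊆ ↑(Finset.Icc 1 C ∪ (Finset.range (2 * Nat.log 2 n + 4)).biUnion
      fun i => (Finset.Icc 1 (weight i)).image (· * quantum a C i)) := by
  rintro m ⟨hm | ⟨i, c, hc, rfl⟩, hmn⟩
  · simp [hm.1, hm.2]
  · have hi : i < 2 * Nat.log 2 n + 4 := lt_of_quantum_le hC hmono hsq <|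
      (Nat.le_mul_of_pos_left _ hc.1).trans hmn.2
    simp only [Finset.coe_union, Finset.coe_biUnion, Finset.coe_image]
    exact Or.inr (Set.mem_biUnion (Finset.mem_range.mpr hi)
      (Set.mem_image_of_mem _ (by simpa using hc)))

lemma card_biUnion_image_weight_le (J : ℕ) (q : ℕ → ℕ) :
    ((Finset.range J).biUnion fun i => (Finset.Icc 1 (weight i)).image (· * q i)).card ≤
      2 * J ^ 7 := by
  calc _ ≤ ∑ i ∈ Finset.range J, ((Finset.Icc 1 (weight i)).image (· * q i)).card :=
        Finset.card_biUnion_le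
    _ ≤ ∑ _i ∈ Finset.range J, 2 * J ^ 6 := by
        refine Finset.sum_le_sum fun i hi => Finset.card_image_le.trans ?_
        rw [Nat.card_Icc, weight, Nat.add_sub_cancel]
        gcongr
        exact Finset.mem_range.mp hi
    _ = 2 * J ^ 7 := by rw [Finset.sum_const, Finset.card_range, smul_eq_mul]; ring

lemma ncard_multipliers_inter_Icc_le (hC : 1 ≤ C) (hmono : StrictMono a)
    (hsq : ∀ i, a (i + 1) ^ 2 ≤ radius a C i) (n : ℕ) :
    (multipliers a C ∩ Set.Icc 1 n).ncard ≤ C + 2 * (2 * Nat.log 2 n + 4) ^ 7 := by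
  refine (Set.ncard_le_ncard (multipliers_inter_Icc_subset hC hmono hsq n)
    (Finset.finite_toSet _)).trans ?_
  rw [Set.ncard_coe_finset]
  refine (Finset.card_union_le _ _).trans (add_le_add ?_ (card_biUnion_image_weight_le _ _))
  simp

lemma ncard_multipliers_inter_Icc_lt (hC : 1 ≤ C) (hmono : StrictMono a)
    (hsq : ∀ i, a (i + 1) ^ 2 ≤ radius a C i) {n : ℕ} (hn : 2 ^ (C + 5000) ≤ n) :
    ((multipliers a C ∩ Set.Icc 1 n).ncard : ℝ) < Real.logb 2 n ^ 8 - 1 := by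
  have hl : C + 5000 ≤ Nat.log 2 n := Nat.le_log_of_pow_le one_lt_two hn
  have hcard : (multipliers a C ∩ Set.Icc 1 n).ncard + 1 < Nat.log 2 n ^ 8 :=
    (Nat.add_le_add_right (ncard_multipliers_inter_Icc_le hC hmono hsq n) 1).trans_lt
      (add_two_mul_pow_seven_lt_pow_eight hl)
  have hlog : (Nat.log 2 n : ℝ) ≤ Real.logb 2 n := Real.natLog_le_logb n 2
  calc ((multipliers a C ∩ Set.Icc 1 n).ncard : ℝ) < (Nat.log 2 n : ℝ) ^ 8 - 1 := by
        have := (Nat.cast_lt (α := ℝ)).mpr hcard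
        push_cast at this
        linarith
    _ ≤ Real.logb 2 n ^ 8 - 1 := by gcongr

end GreedyMultipliers

lemma Real.log_le_half_self {x : ℝ} (hx : 0 < x) : Real.log x ≤ x / 2 := by
  have h := Real.log_le_sub_one_of_pos (half_pos hx)
  rw [Real.log_div hx.ne' two_ne_zero] at h
  linarith [Real.log_two_lt_d9]

lemma Real.mul_log_sub_one_le_log_factorial (n : ℕ) :
    n * (Real.log n - 1) ≤ Real.log (n ! : ℝ) := by
  rcases Nat.eq_zero_or_pos n with rfl | hn
  · simp
  have hn' : (0 : ℝ) < n := by exact_mod_cast hn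
  have h := Real.log_le_log (by positivity) (Real.pow_div_factorial_le_exp (n : ℝ) hn'.le n)
  rw [Real.log_div (by positivity) (by positivity), Real.log_pow, Real.log_exp] at h
  linarith

lemma add_one_mul_log_le {t y : ℝ} (ht : 0 < t) (hL : 10 ≤ Real.log t)
    (hy : 3 * t * (Real.log t - 1) ≤ y) : (t + 1) * Real.log y ≤ 2 / 3 * y := by
  set L := Real.log t
  set v := 3 * t * (L - 1)
  have ht1 : 1 ≤ t := by
    by_contra h
    linarith [Real.log_nonpos ht.le (not_le.mp h).le]
  have hv : 27 ≤ v := by nlinarith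
  have hev : Real.exp 1 ≤ v := by linarith [Real.exp_one_lt_d9]
  have hratio : Real.log y / y ≤ Real.log v / v :=
    Real.log_div_self_antitoneOn hev (hev.trans hy) hy
  have hlogv : Real.log v ≤ 6 / 5 + L + (L - 1) / 2 := by
    have h3 : Real.log 3 ≤ 6 / 5 := by
      have := Real.log_le_sub_one_of_pos (by norm_num : (0:ℝ) < 3 / 2)
      rw [Real.log_div (by norm_num) (by norm_num)] at this
      linarith [Real.log_two_lt_d9]
    rw [Real.log_mul (by positivity) (by linarith), Real.log_mul (by norm_num) ht.ne']
    linarith [Real.log_le_half_self (by linarith : (0:ℝ) < L - 1)]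
  have hLt : L ≤ t / 2 := Real.log_le_half_self ht
  have hv_bound : (t + 1) * Real.log v ≤ 2 / 3 * v := by nlinarith
  have hy0 : 0 < y := by linarith
  have hv0 : 0 < v := by linarith
  calc (t + 1) * Real.log y = (t + 1) * (Real.log y / y) * y := by field_simp
    _ ≤ (t + 1) * (Real.log v / v) * y := by gcongr
    _ = (t + 1) * Real.log v / v * y := by ring
    _ ≤ 2 / 3 * y := mul_le_mul_of_nonneg_right ((div_le_iff₀ hv0).2 (by linarith)) hy0.le

lemma ncard_inter_Icc_le_count (A : Set ℕ) [DecidablePred (· ∈ A)] (m : ℕ) :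
    (A ∩ Set.Icc 1 m).ncard ≤ Nat.count (· ∈ A) (m + 1) := by
  rw [Nat.count_eq_card_filter_range, ← Set.ncard_coe_finset]
  apply Set.ncard_le_ncard _ (Finset.finite_toSet _)
  intro k hk
  simp only [Finset.coe_filter, Finset.mem_range, Set.mem_ofPred_eq]
  exact ⟨Nat.lt_succ_of_le hk.2.2, hk.1⟩

lemma eventually_nth_succ_le_factorial_pow {A : Set ℕ}
    (hdens : Tendsto
      (fun n : ℕ => ((A ∩ Set.Icc 1 n).ncard : ℝ) * Real.log (Real.log n) / Real.log n)
      atTop (𝓝 1)) :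
    ∀ᶠ i in atTop, Nat.nth (· ∈ A) (i + 1) ≤ i ! ^ 3 := by
  classical
  have hs : Tendsto (fun i : ℕ => i ! ^ 3) atTop atTop :=
    tendsto_atTop_mono (fun i => (Nat.self_le_factorial i).trans (Nat.le_self_pow (by norm_num) _))
      tendsto_id
  have h23 := hdens.eventually (eventually_gt_nhds (by norm_num : (2 / 3 : ℝ) < 1))
  filter_upwards [hs.eventually h23, eventually_ge_atTop ⌈Real.exp 10⌉₊] with i hcount hi
  have hi0 : (0 : ℝ) < i := (Real.exp_pos 10).trans_le (Nat.ceil_le.mp hi)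
  have hi1 : (1 : ℝ) ≤ i := Nat.one_le_cast.mpr (Nat.cast_pos.mp hi0)
  have hL : 10 ≤ Real.log i := (Real.le_log_iff_exp_le hi0).2 (Nat.ceil_le.mp hi)
  have hy : 3 * i * (Real.log i - 1) ≤ Real.log ((i ! ^ 3 : ℕ) : ℝ) := by
    rw [Nat.cast_pow, Real.log_pow]
    push_cast
    linarith [Real.mul_log_sub_one_le_log_factorial i]
  have hlog : 1 < Real.log ((i ! ^ 3 : ℕ) : ℝ) := by nlinarith
  have hloglog : 0 < Real.log (Real.log ((i ! ^ 3 : ℕ) : ℝ)) := Real.log_pos hlog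
  rw [lt_div_iff₀ (by linarith)] at hcount
  have hlt : ((i + 1 : ℕ) : ℝ) < (A ∩ Set.Icc 1 (i ! ^ 3)).ncard := by
    push_cast
    nlinarith [add_one_mul_log_le hi0 hL hy]
  refine Nat.le_of_lt_succ (Nat.nth_lt_of_lt_count ?_)
  exact (Nat.cast_lt.mp hlt).trans_le (ncard_inter_Icc_le_count A _)

open GreedyMultipliers

theorem stmt12 (A : Set ℕ) (hA : A.Infinite) (hApos : ∀ a ∈ A, 0 < a) (h1 : 1 ∈ A)
    (hdens : Tendsto
      (fun n : ℕ => ((A ∩ Set.Icc 1 n).ncard : ℝ) * Real.log (Real.log n) / Real.log n)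
      atTop (nhds 1)) :
    ∃ (n₀ : ℕ) (M : Set ℕ), M.Infinite ∧ (∀ m ∈ M, 0 < m) ∧
      ∀ n : ℕ, n > n₀ → 0 < pCount A M n ∧
        ((M ∩ Set.Icc 1 n).ncard : ℝ) < Real.logb 2 n ^ 8 - 1 := by
  have hmono : StrictMono (Nat.nth (· ∈ A)) := Nat.nth_strictMono hA
  have ha0 : Nat.nth (· ∈ A) 0 = 1 := by
    rw [Nat.nth_zero]
    exact le_antisymm (Nat.sInf_le h1) (hApos _ (Nat.sInf_mem ⟨1, h1⟩))
  obtain ⟨C, hC, hsq⟩ := exists_sq_le_radius hmono (eventually_nth_succ_le_factorial_pow hdens)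
  refine ⟨2 ^ (C + 5000), multipliers (Nat.nth (· ∈ A)) C, multipliers_infinite hC hmono hsq,
    pos_of_mem_multipliers hmono hsq, fun n hn => ⟨?_, ?_⟩⟩
  · exact pCount_pos hApos ((representable_range hC ha0 hmono hsq n).mono
      (Set.range_subset_iff.mpr (Nat.nth_mem_of_infinite hA)))
  · exact ncard_multipliers_inter_Icc_lt hC hmono hsq hn.le
end

section
/- Let A₁, A₂, ..., A_k be finitely many infinite sets of positive integers, each containing 1 and each satisfying |A_j ∩ {1,...,n}| = (1+o(1)) · (log n)/(log log n) as n → ∞. Then there exist a constant c, an integer n₀, and a single infinite set M of positive integers such that 0 < p(n,A_j,M) ≤ n^c for every j ∈ {1,...,k} and every n > n₀. -/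
/-!
Take `M = {1, …, K} ∪ F`, where `F` is the set of "floating point numbers" `s · 2 ^ b` whose
mantissa satisfies `s ≤ (log₂ (s · 2 ^ b) + 1) ^ 20`. Only `(log₂ n + 1) ^ 21` elements of `F`
lie below `n`, and a representation of `n` is determined by the multipliers of the at most
`2 log n / log log n` elements of `A ∩ [1, n]`, so
`p(n, A, M) ≤ ((log n) ^ 44) ^ (2 log n / log log n) = n ^ 88`.

Representations are built greedily. While the remainder `r` exceeds `K`, take the largest unused
`a ∈ A` with `a ≤ √r` and subtract `m a`, where `m ∈ F` is `r / a` with all but its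
leading `≈ 15 log₂ log₂ r` binary digits cleared; the new remainder is at most
`r / (log r) ^ 15`. Each
step lowers the budget `⌈log r / (5 log log r)⌉` by at least one, while the density hypothesis
provides more than that many elements of `A` below `√r`, so the elements never run out before the
remainder is at most `K`, where the single term `r · 1` finishes.
-/

open Filter

namespace PCount

def representations (A M : Set ℕ) (n : ℕ) : Set (ℕ →₀ ℕ) :=
  {f | ↑f.support ⊆ A ∧ (∀ a ∈ f.support, f a ∈ M) ∧ f.sum (fun a m => m * a) = n}

theorem pCount_eq_ncard (A M : Set ℕ) (n : ℕ) :
    pCount A M n = (representations A M n).ncard := rfl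

variable {A B M : Set ℕ} {n : ℕ} {f : ℕ →₀ ℕ}

theorem zero_mem_representations : 0 ∈ representations A M 0 := by
  simp [representations]

theorem single_mem_representations {a m : ℕ} (ha : a ∈ A) (hm : m ∈ M) :
    Finsupp.single a m ∈ representations A M (m * a) := by
  refine ⟨fun b hb => ?_, fun b hb => ?_, Finsupp.sum_single_index (zero_mul a)⟩
  · rwa [Finset.mem_singleton.1 (Finsupp.support_single_subset hb)]
  · rwa [Finset.mem_singleton.1 (Finsupp.support_single_subset hb), Finsupp.single_eq_same]

theorem representations_mono (hAB : A ⊆ B) : representations A M n ⊆ representations B M n :=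
  fun _ ⟨hsupp, hM, hsum⟩ => ⟨hsupp.trans hAB, hM, hsum⟩

theorem add_single_mem_representations {a m : ℕ} (hf : f ∈ representations A M n)
    (haA : a ∉ A) (haB : a ∈ B) (hAB : A ⊆ B) (hm : m ∈ M) :
    f + Finsupp.single a m ∈ representations B M (n + m * a) := by
  obtain ⟨hsupp, hM, hsum⟩ := hf
  have hfa : f a = 0 := Finsupp.notMem_support_iff.1 fun h => haA (hsupp h)
  refine ⟨fun b hb => ?_, fun b hb => ?_, ?_⟩
  · rcases Finset.mem_union.1 (Finsupp.support_add hb) with hb | hb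
    · exact hAB (hsupp hb)
    · rwa [Finset.mem_singleton.1 (Finsupp.support_single_subset hb)]
  · rcases eq_or_ne b a with rfl | hba
    · simpa [hfa] using hm
    · have hb' : b ∈ f.support := by simpa [Finsupp.single_eq_of_ne hba] using hb
      simpa [Finsupp.single_eq_of_ne hba] using hM b hb'
  · rw [Finsupp.sum_add_index' (fun _ => zero_mul _) (fun _ _ _ => add_mul _ _ _), hsum,
      Finsupp.sum_single_index (zero_mul a)]

theorem mul_le_of_mem_representations (hf : f ∈ representations A M n) {a : ℕ}
    (ha : a ∈ f.support) : f a * a ≤ n :=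
  hf.2.2 ▸ Finset.single_le_sum (f := fun b => f b * b) (fun _ _ => Nat.zero_le _) ha

open Classical in
theorem representations_subset_finsupp (hA : ∀ a ∈ A, 0 < a) :
    representations A M n ⊆
      ↑(((Finset.Icc 1 n).filter (· ∈ A)).finsupp
        fun _ => insert 0 ((Finset.Icc 1 n).filter (· ∈ M))) := by
  intro f hf
  rw [Finset.mem_coe, Finset.mem_finsupp_iff]
  have hbound : ∀ a ∈ f.support, 1 ≤ a ∧ 1 ≤ f a ∧ f a * a ≤ n := fun a ha =>
    ⟨hA a (hf.1 ha), Nat.one_le_iff_ne_zero.2 (Finsupp.mem_support_iff.1 ha),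
      mul_le_of_mem_representations hf ha⟩
  refine ⟨fun a ha => ?_, fun a _ => ?_⟩
  · obtain ⟨ha1, hfa, hle⟩ := hbound a ha
    simp only [Finset.mem_filter, Finset.mem_Icc]
    exact ⟨⟨ha1, le_trans (Nat.le_mul_of_pos_left a hfa) hle⟩, hf.1 ha⟩
  · by_cases ha : a ∈ f.support
    · obtain ⟨ha1, hfa, hle⟩ := hbound a ha
      simp only [Finset.mem_insert, Finset.mem_filter, Finset.mem_Icc]
      exact Or.inr ⟨⟨hfa, le_trans (Nat.le_mul_of_pos_right _ ha1) hle⟩, hf.2.1 a ha⟩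
    · simp [Finsupp.notMem_support_iff.1 ha]

theorem representations_finite (hA : ∀ a ∈ A, 0 < a) : (representations A M n).Finite :=
  (Finset.finite_toSet _).subset (representations_subset_finsupp hA)

theorem pCount_le_pow (hA : ∀ a ∈ A, 0 < a) :
    pCount A M n ≤ ((M ∩ Set.Icc 1 n).ncard + 1) ^ (A ∩ Set.Icc 1 n).ncard := by
  classical
  have hcard (S : Set ℕ) : ((Finset.Icc 1 n).filter (· ∈ S)).card = (S ∩ Set.Icc 1 n).ncard := by
    rw [← Set.ncard_coe_finset]
    congr 1
    ext x
    simp only [Finset.coe_filter, Finset.mem_Icc, Set.mem_ofPred_eq, Set.mem_inter_iff, Set.mem_Icc]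
    tauto
  calc pCount A M n ≤ (((Finset.Icc 1 n).filter (· ∈ A)).finsupp
        fun _ => insert 0 ((Finset.Icc 1 n).filter (· ∈ M))).card :=
        (Set.ncard_le_ncard (representations_subset_finsupp hA)).trans (Set.ncard_coe_finset _).le
    _ ≤ _ := by
      rw [Finset.card_finsupp, Finset.prod_const, hcard, ← hcard M]
      exact Nat.pow_le_pow_left (Finset.card_insert_le _ _) _

theorem exists_max_inter_Ico {S : Set ℕ} {X : ℕ} (h : (S ∩ Set.Ico 2 X).Nonempty) :
    ∃ a ∈ S, 2 ≤ a ∧ a < X ∧ S ∩ Set.Ico 2 X ⊆ insert a (S ∩ Set.Ico 2 a) := by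
  obtain ⟨a, ⟨haS, ha2, haX⟩, hmax⟩ :=
    Set.exists_max_image _ id ((Set.finite_Ico 2 X).inter_of_right S) h
  refine ⟨a, haS, ha2, haX, fun b ⟨hbS, hb2, hbX⟩ => ?_⟩
  rcases (hmax b ⟨hbS, hb2, hbX⟩).eq_or_lt with rfl | hba
  · exact Set.mem_insert _ _
  · exact Set.mem_insert_of_mem _ ⟨hbS, hb2, hba⟩

theorem exists_mem_representations_of_budget {K : ℕ} (g : ℕ → ℕ) (h1A : 1 ∈ A)
    (hKM : Set.Icc 1 K ⊆ M) (hg_pos : ∀ r, K < r → 0 < g r)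
    (hg_sqrt : ∀ r, K < r → g r ≤ (A ∩ Set.Ico 2 (Nat.sqrt r + 1)).ncard)
    (hstep : ∀ r a, K < r → 2 ≤ a → a ≤ Nat.sqrt r →
      ∃ m ∈ M, 0 < m ∧ m * a ≤ r ∧ (K < r - m * a → g (r - m * a) < g r))
    (r X : ℕ) (hX : 2 ≤ X) (hbudget : K < r → g r ≤ (A ∩ Set.Ico 2 X).ncard) :
    ∃ f, f ∈ representations (A ∩ Set.Iio X) M r := by
  induction r using Nat.strong_induction_on generalizing X with
  | _ r ih =>
  rcases le_or_gt r K with hrK | hrK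
  · rcases Nat.eq_zero_or_pos r with rfl | hr
    · exact ⟨0, zero_mem_representations⟩
    · have h1 : 1 ∈ A ∩ Set.Iio X := ⟨h1A, hX⟩
      exact ⟨_, mul_one r ▸ single_mem_representations h1 (hKM ⟨hr, hrK⟩)⟩
  have hgY : g r ≤ (A ∩ Set.Ico 2 (min X (Nat.sqrt r + 1))).ncard := by
    rcases min_cases X (Nat.sqrt r + 1) with ⟨hY, -⟩ | ⟨hY, -⟩ <;> rw [hY]
    exacts [hbudget hrK, hg_sqrt r hrK]
  obtain ⟨a, haA, ha2, haY, hsplit⟩ := exists_max_inter_Ico <|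
    Set.nonempty_of_ncard_ne_zero (hg_pos r hrK |>.trans_le hgY).ne'
  have haX : a < X := haY.trans_le (min_le_left _ _)
  obtain ⟨m, hmM, hm, hma, hdec⟩ :=
    hstep r a hrK ha2 (Nat.lt_succ_iff.1 (haY.trans_le (min_le_right _ _)))
  have hcount : g r ≤ (A ∩ Set.Ico 2 a).ncard + 1 :=
    hgY.trans <| (Set.ncard_le_ncard hsplit ((Set.toFinite _).insert a)).trans
      (Set.ncard_insert_le _ _)
  obtain ⟨f, hf⟩ := ih (r - m * a) (by have := Nat.mul_le_mul hm ha2; omega) a ha2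
    fun h => by have := hdec h; omega
  refine ⟨f + Finsupp.single a m, ?_⟩
  rw [show r = r - m * a + m * a by omega]
  exact add_single_mem_representations hf (fun h => lt_irrefl a h.2) ⟨haA, haX⟩
    (Set.inter_subset_inter_right _ (Set.Iio_subset_Iio haX.le)) hmM

def floats : Set ℕ := {m | ∃ s b, 0 < s ∧ s ≤ (Nat.log 2 m + 1) ^ 20 ∧ m = s * 2 ^ b}

def multipliers (K : ℕ) : Set ℕ := Set.Icc 1 K ∪ floats

theorem pow_two_mem_floats (b : ℕ) : 2 ^ b ∈ floats :=
  ⟨1, b, one_pos, Nat.one_le_pow _ _ (Nat.succ_pos _), (one_mul _).symm⟩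

theorem multipliers_infinite (K : ℕ) : (multipliers K).Infinite :=
  Set.infinite_of_injective_forall_mem (Nat.pow_right_injective le_rfl)
    fun b => Or.inr (pow_two_mem_floats b)

theorem multipliers_pos (K : ℕ) : ∀ m ∈ multipliers K, 0 < m := by
  rintro m (hm | ⟨s, b, hs, -, rfl⟩)
  exacts [hm.1, by positivity]

theorem ncard_floats_inter_le (n : ℕ) :
    (floats ∩ Set.Icc 1 n).ncard ≤ (Nat.log 2 n + 1) ^ 21 := by
  set L := Nat.log 2 n
  have hsub : floats ∩ Set.Icc 1 n ⊆
      (fun p : ℕ × ℕ => p.1 * 2 ^ p.2) '' (Set.Icc 1 ((L + 1) ^ 20) ×ˢ Set.Iio (L + 1)) := by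
    rintro _ ⟨⟨s, b, hs, hsm, rfl⟩, -, hmn⟩
    refine ⟨(s, b), ⟨⟨hs, ?_⟩, Nat.lt_succ_of_le (Nat.le_log_of_pow_le one_lt_two ?_)⟩, rfl⟩
    · exact hsm.trans (Nat.pow_le_pow_left (Nat.succ_le_succ (Nat.log_mono_right hmn)) _)
    · exact (Nat.le_mul_of_pos_left _ hs).trans hmn
  calc (floats ∩ Set.Icc 1 n).ncard ≤ _ := Set.ncard_le_ncard hsub (Set.toFinite _)
    _ ≤ _ := Set.ncard_image_le (Set.toFinite _)
    _ = (L + 1) ^ 21 := by simp [Set.ncard_prod]; ring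

theorem ncard_multipliers_inter_le (K n : ℕ) :
    (multipliers K ∩ Set.Icc 1 n).ncard ≤ K + (Nat.log 2 n + 1) ^ 21 := by
  rw [multipliers, Set.union_inter_distrib_right]
  refine (Set.ncard_union_le _ _).trans (add_le_add ?_ (ncard_floats_inter_le n))
  exact (Set.ncard_le_ncard Set.inter_subset_left (Set.finite_Icc 1 K)).trans (by simp)

theorem exists_pow_two_mul_le_lt {P r : ℕ} (hP : 0 < P) (hPr : P ≤ r) :
    ∃ b, P * 2 ^ b ≤ r ∧ r < 2 * (P * 2 ^ b) := by
  have hq : r / P ≠ 0 := (Nat.div_pos hPr hP).ne'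
  refine ⟨Nat.log 2 (r / P), ?_, ?_⟩
  · exact (Nat.mul_le_mul_left P (Nat.pow_log_le_self 2 hq)).trans (Nat.mul_div_le r P)
  · calc r < P * (r / P + 1) := Nat.lt_mul_div_succ r hP
      _ ≤ P * 2 ^ (Nat.log 2 (r / P) + 1) :=
        Nat.mul_le_mul_left P (Nat.lt_pow_succ_log_self one_lt_two _)
      _ = 2 * (P * 2 ^ Nat.log 2 (r / P)) := by ring

theorem log_le_two_mul_log_add_three {r m : ℕ} (h : r ≤ 4 * m ^ 2) :
    Nat.log 2 r ≤ 2 * Nat.log 2 m + 3 := by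
  rcases Nat.eq_zero_or_pos r with rfl | hr
  · simp
  suffices r < 2 ^ (2 * Nat.log 2 m + 4) by have := Nat.log_lt_of_lt_pow hr.ne' this; omega
  refine h.trans_lt ?_
  calc 4 * m ^ 2 < 4 * (2 ^ (Nat.log 2 m + 1)) ^ 2 :=
        Nat.mul_lt_mul_of_pos_left (Nat.pow_lt_pow_left (Nat.lt_pow_succ_log_self one_lt_two m)
          two_ne_zero) four_pos
    _ = 2 ^ (2 * Nat.log 2 m + 4) := by ring

theorem two_mul_pow_fifteen_le {l μ : ℕ} (hl : 2 ^ 9 ≤ l) (hlμ : l ≤ 4 * μ) :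
    2 * l ^ 15 ≤ μ ^ 20 := by
  have h5 : 2 * 4 ^ 20 ≤ l ^ 5 := (by norm_num : 2 * 4 ^ 20 ≤ (2 ^ 9) ^ 5).trans
    (Nat.pow_le_pow_left hl 5)
  refine Nat.le_of_mul_le_mul_right ?_ (by positivity : 0 < 4 ^ 20)
  calc 2 * l ^ 15 * 4 ^ 20 = (2 * 4 ^ 20) * l ^ 15 := by ring
    _ ≤ l ^ 5 * l ^ 15 := Nat.mul_le_mul_right _ h5
    _ = l ^ 20 := by ring
    _ ≤ (4 * μ) ^ 20 := Nat.pow_le_pow_left hlμ 20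
    _ = μ ^ 20 * 4 ^ 20 := by ring

theorem exists_float_mul_near {r a : ℕ} (hL : 2 ^ 9 ≤ Nat.log 2 r + 1)
    (hLr : (Nat.log 2 r + 1) ^ 30 ≤ r) (ha : 0 < a) (har : a * a ≤ r) :
    ∃ m ∈ floats, 0 < m ∧ m * a ≤ r ∧ (r - m * a) * (Nat.log 2 r + 1) ^ 15 ≤ r := by
  set l := Nat.log 2 r + 1
  have hD : 2 ≤ l ^ 15 := (Nat.le_self_pow (by norm_num) l).trans' (by omega)
  have haD : a * l ^ 15 ≤ r := Nat.mul_self_le_mul_self_iff.1 <| by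
    calc a * l ^ 15 * (a * l ^ 15) = a * a * l ^ 30 := by ring
      _ ≤ r * r := Nat.mul_le_mul har hLr
  obtain ⟨b, hbr, hrb⟩ := exists_pow_two_mul_le_lt (by positivity) haD
  set d := a * 2 ^ b
  have hd : 0 < d := by positivity
  have hdr : d * l ^ 15 ≤ r := by rw [show d * l ^ 15 = a * l ^ 15 * 2 ^ b by ring]; exact hbr
  have hsd : r / d * d + r % d = r := by rw [mul_comm]; exact Nat.div_add_mod r d
  have hmod : r % d < d := Nat.mod_lt r hd
  have hma : r / d * 2 ^ b * a = r / d * d := by ring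
  have hs : 0 < r / d := Nat.div_pos (le_of_mul_le_of_one_le_left hdr (by omega)) hd
  refine ⟨r / d * 2 ^ b, ⟨r / d, b, hs, ?_, rfl⟩, by positivity,
    hma ▸ Nat.div_mul_le_self r d, ?_⟩
  · have hsl : r / d < 2 * l ^ 15 := (Nat.div_lt_iff_lt_mul hd).2 <| by
      rw [show 2 * l ^ 15 * d = 2 * (a * l ^ 15 * 2 ^ b) by ring]; exact hrb
    -- `m a ≥ r / 2` and `a ≤ √r` give `4 m ^ 2 ≥ r`: `m` has about half as many binary digits
    -- as `r`, which leaves room for a mantissa of size `2 l ^ 15`.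
    have h2ma : r ≤ 2 * (r / d * d) := by nlinarith
    have hsq : r ≤ 4 * (r / d * 2 ^ b) ^ 2 := by
      refine Nat.le_of_mul_le_mul_right (c := a * a) ?_ (by positivity)
      calc r * (a * a) ≤ r * r := Nat.mul_le_mul_left r har
        _ ≤ (2 * (r / d * d)) * (2 * (r / d * d)) := Nat.mul_le_mul h2ma h2ma
        _ = 4 * (r / d * 2 ^ b) ^ 2 * (a * a) := by ring
    have := log_le_two_mul_log_add_three hsq
    exact hsl.le.trans (le_trans (by omega) (two_mul_pow_fifteen_le hL (by omega)))
  · rw [hma]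
    calc (r - r / d * d) * l ^ 15 ≤ d * l ^ 15 := Nat.mul_le_mul_right _ (by omega)
      _ ≤ r := hdr

open Real

theorem natCast_pos_of_log_pos {n : ℕ} (h : 0 < log n) : (0 : ℝ) < n :=
  Nat.cast_pos.2 (Nat.pos_of_ne_zero fun h0 => by simp [h0] at h)

theorem fifty_mul_log_le {x : ℝ} (hx : 0 < x) (hlx : 100 ≤ log x) : 50 * log x ≤ x :=
  calc 50 * log x ≤ 1 + log x + log x ^ 2 / 2 := by nlinarith
    _ ≤ exp (log x) := quadratic_le_exp_of_nonneg (by linarith)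
    _ = x := exp_log hx

theorem div_log_le_div_log {u v : ℝ} (hu : exp 1 ≤ u) (huv : u ≤ v) :
    u / log u ≤ v / log v := by
  have hlu : 0 < log u := log_pos (lt_of_lt_of_le (by linarith [add_one_le_exp 1]) hu)
  have h := log_div_self_antitoneOn hu (hu.trans huv : exp 1 ≤ v) huv
  rw [← inv_div (log u), ← inv_div (log v)]
  exact inv_anti₀ (div_pos (hlu.trans_le (log_le_log (by linarith [exp_pos 1]) huv))
    (by linarith [exp_pos 1])) h

theorem div_log_add_five_le {x x' : ℝ} (hx' : 0 < x') (hlx' : 100 ≤ log x') (hlx : 100 ≤ log x)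
    (h : x' + 15 * log x ≤ x) : x' / log x' + 5 ≤ x / log x := by
  set g := log x
  have hx : 0 < x := by linarith
  have hgx := fifty_mul_log_le hx hlx
  set y := x - 15 * g
  have hy : x / 2 ≤ y := by linarith
  -- `log (x / y) ≤ x / y - 1` bounds how much the logarithm drops from `x` to `y`.
  have hlogy : g - 30 * g / x ≤ log y := by
    have h1 := log_le_sub_one_of_pos (div_pos hx (by linarith : 0 < y))
    rw [log_div hx.ne' (by linarith)] at h1
    have h2 : x / y - 1 ≤ 30 * g / x := by
      rw [div_sub_one (by linarith), div_le_div_iff₀ (by linarith) hx]; nlinarith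
    linarith
  have hδ : 30 * g / x * x = 30 * g := div_mul_cancel₀ _ hx.ne'
  have hδ0 : 0 ≤ 30 * g / x := by positivity
  have hδ1 : 30 * g / x ≤ 1 := (div_le_one hx).2 (by linarith)
  have he : Real.exp 1 ≤ x' := by
    linarith [Real.exp_one_lt_d9, fifty_mul_log_le hx' hlx']
  calc x' / log x' + 5 ≤ y / log y + 5 := by
        gcongr ?_ + 5; exact div_log_le_div_log he (by linarith)
    _ ≤ y / (g - 30 * g / x) + 5 := by gcongr <;> linarith
    _ ≤ (x - 5 * g) / g + 5 := by
      gcongr ?_ + 5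
      rw [div_le_div_iff₀ (by linarith) (by linarith)]
      nlinarith
    _ = x / g := by field_simp; ring

noncomputable def budget (r : ℕ) : ℕ := ⌈log r / (5 * log (log r))⌉₊

theorem one_lt_log_of_le_log_log {r : ℕ} (hr : 100 ≤ log (log r)) : 1 < log r :=
  (log_pos_iff (log_natCast_nonneg r)).1 (by linarith)

theorem budget_pos {r : ℕ} (hr : 100 ≤ log (log r)) : 0 < budget r :=
  Nat.ceil_pos.2 (div_pos (by linarith [one_lt_log_of_le_log_log hr]) (by linarith))

theorem log_lt_natLog_add_one (r : ℕ) : log r < Nat.log 2 r + 1 := by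
  rcases Nat.eq_zero_or_pos r with rfl | hr
  · simp
  calc log r < log ((2 : ℝ) ^ (Nat.log 2 r + 1)) := log_lt_log (by positivity) (by
        exact_mod_cast Nat.lt_pow_succ_log_self one_lt_two r)
    _ = (Nat.log 2 r + 1) * log 2 := by rw [log_pow]; push_cast; ring
    _ ≤ Nat.log 2 r + 1 := mul_le_of_le_one_right (by positivity)
        (by linarith [log_two_lt_d9])

theorem budget_lt {r r' : ℕ} (hr : 100 ≤ log (log r)) (hr' : 100 ≤ log (log r'))
    (h : r' * (Nat.log 2 r + 1) ^ 15 ≤ r) : budget r' < budget r := by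
  have hr'0 := natCast_pos_of_log_pos (one_pos.trans (one_lt_log_of_le_log_log hr'))
  have hlr := one_lt_log_of_le_log_log hr
  have hle : (r' : ℝ) * log r ^ 15 ≤ (r : ℝ) := by
    calc (r' : ℝ) * log r ^ 15 ≤ (r' : ℝ) * ((Nat.log 2 r + 1 : ℕ) : ℝ) ^ 15 := by
          gcongr; exact_mod_cast (log_lt_natLog_add_one r).le
      _ ≤ (r : ℝ) := by exact_mod_cast h
  have hdec : log r' + 15 * log (log r) ≤ log r := by
    have := log_le_log (by positivity) hle
    rwa [log_mul hr'0.ne' (by positivity), log_pow, Nat.cast_ofNat] at this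
  have h5 := div_log_add_five_le (by linarith [one_lt_log_of_le_log_log hr']) hr' hr hdec
  have hdiv : log r' / (5 * log (log r')) + 1 ≤ log r / (5 * log (log r)) := by
    simp only [mul_comm (5 : ℝ), ← div_div]; linarith
  rw [budget, budget, Nat.lt_iff_add_one_le, ← Nat.ceil_add_one (by positivity)]
  exact Nat.ceil_le_ceil hdiv

theorem log_le_two_mul_log_sqrt_add_two (r : ℕ) : log r ≤ 2 * log (Nat.sqrt r) + 2 := by
  rcases Nat.eq_zero_or_pos r with rfl | hr
  · simp
  have h4 : (r : ℝ) ≤ 2 ^ 2 * (Nat.sqrt r : ℝ) ^ 2 := by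
    have h : (r : ℝ) ≤ (Nat.sqrt r + 1) * (Nat.sqrt r + 1) := by
      exact_mod_cast (Nat.lt_succ_sqrt r).le
    have : (1 : ℝ) ≤ Nat.sqrt r := by exact_mod_cast Nat.sqrt_pos.2 hr
    nlinarith
  have := log_le_log (by positivity) h4
  rw [log_mul (by norm_num) (by positivity), log_pow, log_pow] at this
  push_cast at this
  linarith [log_two_lt_d9]

theorem budget_add_one_le {r c : ℕ} (hr : 100 ≤ log (log r))
    (hc : log (Nat.sqrt r) ≤ 2 * (c * log (log (Nat.sqrt r)))) : budget r + 1 ≤ c := by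
  set x := log r
  have hx1 := one_lt_log_of_le_log_log hr
  have hx50 := fifty_mul_log_le (by linarith) hr
  have hy_le : log (Nat.sqrt r) ≤ x := log_le_log
    (by exact_mod_cast Nat.sqrt_pos.2 (Nat.cast_pos.1 (natCast_pos_of_log_pos (by linarith))))
    (by exact_mod_cast Nat.sqrt_le_self r)
  have hy_ge := log_le_two_mul_log_sqrt_add_two r
  have hll : log (log (Nat.sqrt r)) ≤ log x := log_le_log (by linarith) hy_le
  have hcx : x ≤ 4 * c * log x + 2 := by nlinarith [(Nat.cast_nonneg c : (0 : ℝ) ≤ c)]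
  set t := x / (5 * log x)
  have hxt : x = 5 * log x * t := (mul_div_cancel₀ x (by linarith : 5 * log x ≠ 0)).symm
  have hceil : (budget r : ℝ) < t + 1 := Nat.ceil_lt_add_one (by positivity)
  have htc : t + 2 ≤ c := le_of_mul_le_mul_right (by nlinarith) (by linarith : 0 < 4 * log x)
  exact_mod_cast (by linarith : (budget r : ℝ) + 1 ≤ c)

theorem ncard_inter_Icc_one_le (A : Set ℕ) (y : ℕ) :
    (A ∩ Set.Icc 1 y).ncard ≤ (A ∩ Set.Ico 2 (y + 1)).ncard + 1 := by
  refine (Set.ncard_le_ncard (t := insert 1 (A ∩ Set.Ico 2 (y + 1))) ?_ (Set.toFinite _)).trans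
    (Set.ncard_insert_le _ _)
  rintro b ⟨hbA, hb1, hby⟩
  rcases eq_or_lt_of_le hb1 with rfl | hb
  exacts [Set.mem_insert _ _, Set.mem_insert_of_mem _ ⟨hbA, hb, Nat.lt_succ_of_le hby⟩]

theorem natLog_add_one_pow_le {n : ℕ} (hn : 3 ≤ log n) (k : ℕ) :
    ((Nat.log 2 n + 1 : ℕ) : ℝ) ^ k ≤ log n ^ (2 * k) := by
  have hn0 := natCast_pos_of_log_pos (by linarith)
  have h : (Nat.log 2 n : ℝ) * log 2 ≤ log n := by
    rw [← log_pow]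
    exact log_le_log (by positivity)
      (by exact_mod_cast Nat.pow_log_le_self 2 (Nat.cast_pos.1 hn0).ne')
  rw [pow_mul]
  refine pow_le_pow_left₀ (by positivity) ?_ k
  push_cast
  nlinarith [log_two_gt_d9, (Nat.cast_nonneg _ : (0 : ℝ) ≤ Nat.log 2 n)]

theorem pow_le_rpow_of_le_log_pow {n D t k : ℕ} {C : ℝ} (hD : 0 < D) (hn : 1 < log n)
    (hDn : (D : ℝ) ≤ log n ^ k) (ht : t * log (log n) ≤ C * log n) :
    (D : ℝ) ^ t ≤ (n : ℝ) ^ (k * C) := by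
  have hn0 := natCast_pos_of_log_pos (one_pos.trans hn)
  rw [← exp_log (pow_pos (Nat.cast_pos.2 hD) t), ← exp_log (rpow_pos_of_pos hn0 _), exp_le_exp,
    log_pow, log_rpow hn0]
  have hlogD : log D ≤ k * log (log n) := by
    rw [← log_pow]; exact log_le_log (Nat.cast_pos.2 hD) hDn
  calc (t : ℝ) * log D ≤ t * (k * log (log n)) := by gcongr
    _ = k * (t * log (log n)) := by ring
    _ ≤ k * (C * log n) := by gcongr
    _ = k * C * log n := by ring

theorem eventually_le_two_mul_of_tendsto_div {ι : Type*} {l : Filter ι} {u v : ι → ℝ}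
    (h : Tendsto (fun i => u i / v i) l (nhds 1)) (hv : ∀ᶠ i in l, 0 < v i) :
    ∀ᶠ i in l, v i ≤ 2 * u i ∧ u i ≤ 2 * v i := by
  filter_upwards [h (Ioo_mem_nhds (by norm_num : (1 / 2 : ℝ) < 1) one_lt_two), hv] with i hi hvi
  rw [Set.mem_preimage, Set.mem_Ioo, lt_div_iff₀ hvi, div_lt_iff₀ hvi] at hi
  constructor <;> linarith [hi.1, hi.2]

theorem tendsto_natLog_two_atTop : Tendsto (Nat.log 2) atTop atTop :=
  tendsto_atTop_atTop.2 fun L => ⟨2 ^ L, fun _ hr => Nat.le_log_of_pow_le one_lt_two hr⟩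

theorem eventually_natLog_large :
    ∀ᶠ r : ℕ in atTop, 2 ^ 9 ≤ Nat.log 2 r + 1 ∧ (Nat.log 2 r + 1) ^ 30 ≤ r := by
  have hpoly : ∀ᶠ l : ℕ in atTop, 2 ^ 9 ≤ l ∧ 2 * l ^ 30 ≤ 2 ^ l := by
    refine (eventually_ge_atTop _).and ?_
    filter_upwards [(isLittleO_pow_const_const_pow_of_one_lt (R := ℝ) 30 one_lt_two).bound
      (by norm_num : (0 : ℝ) < 1 / 2)] with l hl
    simp only [norm_pow, RCLike.norm_natCast, Real.norm_ofNat] at hl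
    exact_mod_cast (by linarith : 2 * (l : ℝ) ^ 30 ≤ 2 ^ l)
  have hlog : Tendsto (fun r => Nat.log 2 r + 1) atTop atTop :=
    tendsto_atTop_mono (fun r => Nat.le_succ _) tendsto_natLog_two_atTop
  filter_upwards [hlog.eventually hpoly, eventually_ge_atTop 1] with r ⟨h9, h30⟩ hr
  refine ⟨h9, Nat.le_of_mul_le_mul_left ?_ two_pos⟩
  calc 2 * (Nat.log 2 r + 1) ^ 30 ≤ 2 ^ (Nat.log 2 r + 1) := h30
    _ = 2 * 2 ^ Nat.log 2 r := by ring
    _ ≤ 2 * r := Nat.mul_le_mul_left 2 (Nat.pow_log_le_self 2 (by omega))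

theorem representations_multipliers_nonempty {A : Set ℕ} (h1A : 1 ∈ A) {K N : ℕ}
    (hK : ∀ r, K < r → 100 ≤ log (log r) ∧
      (2 ^ 9 ≤ Nat.log 2 r + 1 ∧ (Nat.log 2 r + 1) ^ 30 ≤ r) ∧ N * N ≤ r)
    (hlow : ∀ y, N ≤ y → log y ≤ 2 * ((A ∩ Set.Icc 1 y).ncard * log (log y))) (r : ℕ) :
    (representations A (multipliers K) r).Nonempty := by
  have hg_sqrt : ∀ r, K < r → budget r ≤ (A ∩ Set.Ico 2 (Nat.sqrt r + 1)).ncard := fun r hr =>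
    Nat.le_of_succ_le_succ <| (budget_add_one_le (hK r hr).1 <|
      hlow _ (Nat.le_sqrt.2 (hK r hr).2.2)).trans (ncard_inter_Icc_one_le A _)
  have hstep : ∀ r a, K < r → 2 ≤ a → a ≤ Nat.sqrt r → ∃ m ∈ multipliers K, 0 < m ∧
      m * a ≤ r ∧ (K < r - m * a → budget (r - m * a) < budget r) := by
    intro r a hr ha hasqrt
    obtain ⟨m, hmF, hm, hma, hrem⟩ :=
      exists_float_mul_near (hK r hr).2.1.1 (hK r hr).2.1.2 (by omega) (Nat.le_sqrt.1 hasqrt)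
    exact ⟨m, Or.inr hmF, hm, hma, fun hr' => budget_lt (hK r hr).1 (hK _ hr').1 hrem⟩
  obtain ⟨f, hf⟩ := exists_mem_representations_of_budget budget h1A Set.subset_union_left
    (fun r hr => budget_pos (hK r hr).1) hg_sqrt hstep r (r + 2) (by omega) fun hr =>
      (hg_sqrt r hr).trans <| Set.ncard_le_ncard <| Set.inter_subset_inter_right _ <|
        Set.Ico_subset_Ico_right (by have := Nat.sqrt_le_self r; omega)
  exact ⟨f, representations_mono Set.inter_subset_left hf⟩

theorem pCount_multipliers_le_rpow {A : Set ℕ} (hA : ∀ a ∈ A, 0 < a) {K n : ℕ}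
    (hKn : K + 1 ≤ Nat.log 2 n) (hn : 3 ≤ log n)
    (hhigh : ((A ∩ Set.Icc 1 n).ncard : ℝ) * log (log n) ≤ 2 * log n) :
    (pCount A (multipliers K) n : ℝ) ≤ (n : ℝ) ^ (88 : ℝ) := by
  have hM := ncard_multipliers_inter_le K n
  have hLpow := natLog_add_one_pow_le hn 22
  generalize Nat.log 2 n = L at hKn hM hLpow
  have hD : (multipliers K ∩ Set.Icc 1 n).ncard + 1 ≤ (L + 1) ^ 22 := by
    have h1 : 1 ≤ (L + 1) ^ 21 := Nat.one_le_pow _ _ (Nat.succ_pos L)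
    calc (multipliers K ∩ Set.Icc 1 n).ncard + 1 ≤ K + (L + 1) ^ 21 + 1 := Nat.succ_le_succ hM
      _ ≤ L * (L + 1) ^ 21 + (L + 1) ^ 21 := by
          have := Nat.le_mul_of_pos_right L h1; omega
      _ = (L + 1) ^ 22 := by ring
  have hDlog : (((multipliers K ∩ Set.Icc 1 n).ncard + 1 : ℕ) : ℝ) ≤ log n ^ (2 * 22) :=
    le_trans (by exact_mod_cast hD) hLpow
  calc (pCount A (multipliers K) n : ℝ)
      ≤ (((multipliers K ∩ Set.Icc 1 n).ncard + 1 : ℕ) : ℝ) ^ (A ∩ Set.Icc 1 n).ncard := by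
        exact_mod_cast pCount_le_pow hA
    _ ≤ (n : ℝ) ^ ((44 : ℕ) * (2 : ℝ)) :=
        pow_le_rpow_of_le_log_pow (Nat.succ_pos _) (by linarith) hDlog hhigh
    _ = (n : ℝ) ^ (88 : ℝ) := by norm_num

end PCount

open PCount

theorem stmt13_general (k : ℕ) (A : Fin k → Set ℕ)
    (hApos : ∀ j, ∀ a ∈ A j, 0 < a) (h1 : ∀ j, 1 ∈ A j)
    (hdens : ∀ j, Tendsto
      (fun n : ℕ => (((A j) ∩ Set.Icc 1 n).ncard : ℝ) * Real.log (Real.log n) / Real.log n)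
      atTop (nhds 1)) :
    ∃ (c : ℝ) (n₀ : ℕ) (M : Set ℕ), M.Infinite ∧ (∀ m ∈ M, 0 < m) ∧
      ∀ j, ∀ n : ℕ, n > n₀ →
        0 < pCount (A j) M n ∧ (pCount (A j) M n : ℝ) ≤ (n : ℝ) ^ c := by
  have hlog : Tendsto (fun n : ℕ => Real.log n) atTop atTop :=
    Real.tendsto_log_atTop.comp tendsto_natCast_atTop_atTop
  obtain ⟨N, hN⟩ := eventually_atTop.1 <| eventually_all.2 fun j =>
    eventually_le_two_mul_of_tendsto_div (hdens j) (hlog.eventually_gt_atTop 0)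
  obtain ⟨K, hK⟩ := eventually_atTop.1 <|
    ((Real.tendsto_log_atTop.comp hlog).eventually_ge_atTop 100).and <|
      eventually_natLog_large.and (eventually_ge_atTop (N * N))
  obtain ⟨n₀, hn₀⟩ := eventually_atTop.1 <|
    (tendsto_natLog_two_atTop.eventually_ge_atTop (K + 1)).and <|
      (hlog.eventually_ge_atTop 3).and (eventually_ge_atTop N)
  refine ⟨88, n₀, multipliers K, multipliers_infinite K, multipliers_pos K, fun j n hn => ?_⟩
  obtain ⟨hKn, hn3, hNn⟩ := hn₀ n hn.le
  refine ⟨?_, pCount_multipliers_le_rpow (hApos j) hKn hn3 (hN n hNn j).2⟩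
  rw [pCount_eq_ncard, Set.ncard_pos (representations_finite (hApos j))]
  exact representations_multipliers_nonempty (h1 j) (fun r hr => hK r hr.le)
    (fun y hy => (hN y hy j).1) n

theorem stmt13 (k : ℕ) (A : Fin k → Set ℕ)
    (hA : ∀ j, (A j).Infinite) (hApos : ∀ j, ∀ a ∈ A j, 0 < a) (h1 : ∀ j, 1 ∈ A j)
    (hdens : ∀ j, Tendsto
      (fun n : ℕ => (((A j) ∩ Set.Icc 1 n).ncard : ℝ) * Real.log (Real.log n) / Real.log n)
      atTop (nhds 1)) :
    ∃ (c : ℝ) (n₀ : ℕ) (M : Set ℕ), M.Infinite ∧ (∀ m ∈ M, 0 < m) ∧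
      ∀ j, ∀ n : ℕ, n > n₀ →
        0 < pCount (A j) M n ∧ (pCount (A j) M n : ℝ) ≤ (n : ℝ) ^ c :=
  stmt13_general k A hApos h1 hdens
end
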